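/- arXiv:1907.01687 — 5 statements merged into one kernel-verified Lean document; each statement's English description precedes it below -/
import Mathlib

section
/- There exists a constant C > 0, independent of n, such that for every integer n ≥ 2, Σ_{j=1}^{n−1} (n choose j) · j^{j−2/3} · (n−j)^{n−j−2/3} ≤ C n^{n−2/3}. -/
open Real Finset Stirling


lemma stirling_seq_ge (n : ℕ) (hn : 1 ≤ n) : (1:ℝ) ≤ stirlingSeq n := by
  have h1 : Real.sqrt π ≤ stirlingSeq n := by
    obtain ⟨m, rfl⟩ := Nat.exists_eq_add_of_le hn
    have := stirlingSeq'_antitone.le_of_tendsto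
      (tendsto_stirlingSeq_sqrt_pi.comp (Filter.tendsto_add_atTop_nat 1)) m
    simpa [Function.comp, Nat.add_comm] using this
  have hpi : (1:ℝ) ≤ Real.sqrt π := by
    rw [show (1:ℝ) = Real.sqrt 1 by simp]
    exact Real.sqrt_le_sqrt (by linarith [Real.pi_gt_three])
  linarith

lemma stirling_seq_le (n : ℕ) (hn : 1 ≤ n) : stirlingSeq n ≤ 2 := by
  obtain ⟨m, rfl⟩ := Nat.exists_eq_add_of_le hn
  have h := stirlingSeq'_antitone (Nat.zero_le m)
  simp only [Function.comp] at h
  have h1 : stirlingSeq (1 + m) ≤ stirlingSeq 1 := by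
    simpa [Nat.add_comm] using h
  have : stirlingSeq 1 ≤ 2 := by
    rw [stirlingSeq_one]
    rw [div_le_iff₀ (by positivity)]
    have h2 : Real.exp 1 < 2.7182818286 := Real.exp_one_lt_d9
    have h3 : (1.4:ℝ) ≤ Real.sqrt 2 := by
      rw [show (1.4:ℝ) = Real.sqrt (1.4^2) by rw [Real.sqrt_sq]; norm_num]
      exact Real.sqrt_le_sqrt (by norm_num)
    nlinarith
  linarith

lemma stirling_lower (n : ℕ) (hn : 1 ≤ n) :
    Real.sqrt (2*n) * ((n:ℝ) / Real.exp 1) ^ n ≤ n.factorial := by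
  have hpos : 0 < Real.sqrt (2*n) * ((n:ℝ) / Real.exp 1) ^ n := by
    have : (0:ℝ) < n := by exact_mod_cast hn
    positivity
  have h := stirling_seq_ge n hn
  rw [stirlingSeq, le_div_iff₀ hpos] at h
  linarith

lemma stirling_upper (n : ℕ) (hn : 1 ≤ n) :
    (n.factorial : ℝ) ≤ 2 * (Real.sqrt (2*n) * ((n:ℝ) / Real.exp 1) ^ n) := by
  have hpos : 0 < Real.sqrt (2*n) * ((n:ℝ) / Real.exp 1) ^ n := by
    have : (0:ℝ) < n := by exact_mod_cast hn
    positivity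
  have h := stirling_seq_le n hn
  rw [stirlingSeq, div_le_iff₀ hpos] at h
  linarith
set_option maxHeartbeats 1000000 in
lemma choose_bound (j k : ℕ) (hj : 1 ≤ j) (hk : 1 ≤ k) :
    ((j+k).choose j : ℝ) * (Real.sqrt j * Real.sqrt k) * ((j:ℝ)^j * (k:ℝ)^k)
      ≤ 2 * Real.sqrt ((j:ℝ)+(k:ℝ)) * ((j:ℝ)+(k:ℝ))^(j+k) := by
  have hE : (0:ℝ) < Real.exp 1 := Real.exp_pos 1
  have hjR : (0:ℝ) < j := by exact_mod_cast hj
  have hkR : (0:ℝ) < k := by exact_mod_cast hk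
  have hid : ((j+k).choose j : ℝ) * j.factorial * k.factorial = (j+k).factorial := by
    have := Nat.choose_mul_factorial_mul_factorial (Nat.le_add_right j k)
    simp only [Nat.add_sub_cancel_left] at this
    exact_mod_cast this
  set c : ℝ := ((j+k).choose j : ℝ) with hc
  have hcpos : (0:ℝ) ≤ c := Nat.cast_nonneg _
  have hfj := stirling_lower j hj
  have hfk := stirling_lower k hk
  have hfn := stirling_upper (j+k) (by omega)
  have hposj : (0:ℝ) < Real.sqrt (2*j) * ((j:ℝ)/Real.exp 1)^j := by positivity
  have hposk : (0:ℝ) < Real.sqrt (2*k) * ((k:ℝ)/Real.exp 1)^k := by positivity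
  have h1 : c * (Real.sqrt (2*j) * ((j:ℝ)/Real.exp 1)^j)
      * (Real.sqrt (2*k) * ((k:ℝ)/Real.exp 1)^k) ≤ (j+k).factorial := by
    calc c * (Real.sqrt (2*j) * ((j:ℝ)/Real.exp 1)^j)
        * (Real.sqrt (2*k) * ((k:ℝ)/Real.exp 1)^k)
        ≤ c * j.factorial * k.factorial := by
          apply mul_le_mul _ hfk hposk.le (by positivity)
          exact mul_le_mul_of_nonneg_left hfj hcpos
      _ = (j+k).factorial := hid
  have h2 := h1.trans hfn
  have hs1 : Real.sqrt (2*(j:ℝ)) = Real.sqrt 2 * Real.sqrt j := Real.sqrt_mul (by norm_num) _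
  have hs2 : Real.sqrt (2*(k:ℝ)) = Real.sqrt 2 * Real.sqrt k := Real.sqrt_mul (by norm_num) _
  have hs3 : Real.sqrt (2*((j:ℝ)+(k:ℝ))) = Real.sqrt 2 * Real.sqrt ((j:ℝ)+(k:ℝ)) :=
    Real.sqrt_mul (by norm_num) _
  push_cast at h2
  rw [hs1, hs2, hs3, div_pow, div_pow, div_pow] at h2
  have hEjk : (0:ℝ) < Real.exp 1 ^ (j+k) := by positivity
  have h2' := mul_le_mul_of_nonneg_right h2 hEjk.le
  rw [pow_add] at h2'
  have hEj : (0:ℝ) < Real.exp 1 ^ j := by positivity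
  have hEk : (0:ℝ) < Real.exp 1 ^ k := by positivity
  have hL : c * (Real.sqrt 2 * Real.sqrt j * ((j:ℝ) ^ j / Real.exp 1 ^ j)) *
        (Real.sqrt 2 * Real.sqrt k * ((k:ℝ) ^ k / Real.exp 1 ^ k)) * (Real.exp 1 ^ j * Real.exp 1 ^ k)
      = 2 * (c * (Real.sqrt j * Real.sqrt k) * ((j:ℝ)^j * (k:ℝ)^k)) := by
    field_simp
    linear_combination c *
      (Real.mul_self_sqrt (show (0:ℝ) ≤ 2 by norm_num))
  have hR : 2 * (Real.sqrt 2 * Real.sqrt ((j:ℝ) + k) * (((j:ℝ) + k) ^ (j + k) / (Real.exp 1 ^ j * Real.exp 1 ^ k))) * (Real.exp 1 ^ j * Real.exp 1 ^ k)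
      = 2 * Real.sqrt 2 * (Real.sqrt ((j:ℝ)+(k:ℝ)) * ((j:ℝ)+(k:ℝ))^(j+k)) := by
    field_simp
  rw [hL, hR] at h2'
  have hs2le : Real.sqrt 2 ≤ 2 := by
    nlinarith [Real.sq_sqrt (show (0:ℝ) ≤ 2 by norm_num), Real.sqrt_nonneg (2:ℝ)]
  have hnn : (0:ℝ) ≤ Real.sqrt ((j:ℝ)+(k:ℝ)) * ((j:ℝ)+(k:ℝ))^(j+k) := by positivity
  nlinarith [h2']

lemma aux_xy (x y : ℝ) (hx : 0 < x) (hxy : x ≤ y) (h : x ≤ y - 1/(6*y^5)) :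
    1/y^7 ≤ 6*(1/x - 1/y) := by
  have hy : 0 < y := lt_of_lt_of_le hx hxy
  have h1 : 1/(6*y^5) ≤ y - x := by linarith
  have e1 : 6*(1/x - 1/y) = 6*(y-x)/(x*y) := by field_simp
  have e2 : 6*(1/(6*y^5))/(x*y) ≤ 6*(y-x)/(x*y) := by gcongr
  have e3 : 6*(1/(6*y^5))/(x*y) = 1/(x*y^6) := by field_simp
  have e4 : 1/y^7 ≤ 1/(x*y^6) := by
    apply one_div_le_one_div_of_le (by positivity)
    calc x*y^6 ≤ y*y^6 := by gcongr
      _ = y^7 := by ring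
  rw [e1]; rw [e3] at e2; linarith

lemma key_ineq (a : ℝ) (ha : 1 ≤ a) :
    (a+1) ^ (-(7:ℝ)/6) ≤ 6 * (a ^ (-(1:ℝ)/6) - (a+1) ^ (-(1:ℝ)/6)) := by
  have hapos : (0:ℝ) < a := by linarith
  have hb : (0:ℝ) < a + 1 := by linarith
  set y : ℝ := (a+1) ^ ((1:ℝ)/6) with hy
  set x : ℝ := a ^ ((1:ℝ)/6) with hx
  have hypos : 0 < y := Real.rpow_pos_of_pos hb _
  have hxpos : 0 < x := Real.rpow_pos_of_pos hapos _
  have hy6 : y^6 = a + 1 := by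
    rw [hy, ← Real.rpow_natCast (_ ^ _) 6, ← Real.rpow_mul hb.le]; norm_num
  have hy5 : y^5 = (a+1) ^ ((5:ℝ)/6) := by
    rw [hy, ← Real.rpow_natCast (_ ^ _) 5, ← Real.rpow_mul hb.le]; norm_num
  have hy7 : y^7 = (a+1) ^ ((7:ℝ)/6) := by
    rw [hy, ← Real.rpow_natCast (_ ^ _) 7, ← Real.rpow_mul hb.le]; norm_num
  have hxy : x ≤ y := Real.rpow_le_rpow hapos.le (by linarith) (by norm_num)
  -- step 1 : Bernoulli
  have h1b : (0:ℝ) ≤ 1 - 1/(a+1) := by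
    rw [sub_nonneg]; rw [div_le_one hb]; linarith
  have h6b : (0:ℝ) ≤ 1 - 1/(6*(a+1)) := by
    rw [sub_nonneg]; rw [div_le_one (by linarith)]; linarith
  have hber : 1 - 1/(a+1) ≤ (1 - 1/(6*(a+1)))^(6:ℕ) := by
    have h := one_add_mul_le_pow (a := -(1/(6*(a+1)))) (by nlinarith [hb]) 6
    have e : (1:ℝ) + (6:ℕ) * (-(1/(6*(a+1)))) = 1 - 1/(a+1) := by
      push_cast; field_simp; ring
    rw [e] at h
    exact h.trans_eq (by ring)
  have step1 : (1 - 1/(a+1)) ^ ((1:ℝ)/6) ≤ 1 - 1/(6*(a+1)) := by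
    calc (1 - 1/(a+1)) ^ ((1:ℝ)/6) ≤ ((1 - 1/(6*(a+1)))^(6:ℕ)) ^ ((1:ℝ)/6) :=
          Real.rpow_le_rpow h1b hber (by norm_num)
      _ = 1 - 1/(6*(a+1)) := by
          rw [← Real.rpow_natCast (1 - 1/(6*(a+1))) 6, ← Real.rpow_mul h6b]
          norm_num
  -- step 2 : x ≤ y - 1/(6 y^5)
  have step2 : x ≤ y - 1/(6*y^5) := by
    have ha' : a = (a+1) * (1 - 1/(a+1)) := by field_simp; ring
    have hxe : x = y * (1 - 1/(a+1)) ^ ((1:ℝ)/6) := by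
      rw [hx, hy]
      nth_rewrite 1 [ha']
      exact Real.mul_rpow hb.le h1b
    rw [hxe]
    have h2 : y * (1 - 1/(a+1)) ^ ((1:ℝ)/6) ≤ y * (1 - 1/(6*(a+1))) :=
      mul_le_mul_of_nonneg_left step1 hypos.le
    refine h2.trans (le_of_eq ?_)
    have hyne : y ≠ 0 := ne_of_gt hypos
    rw [← hy6]
    field_simp
  have main := aux_xy x y hxpos hxy step2
  -- translate back
  have e1 : 1/y^7 = (a+1) ^ (-(7:ℝ)/6) := by
    rw [hy7, one_div, ← Real.rpow_neg hb.le]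
    norm_num
  have e2 : 1/x = a ^ (-(1:ℝ)/6) := by
    rw [hx, one_div, ← Real.rpow_neg hapos.le]
    norm_num
  have e3 : 1/y = (a+1) ^ (-(1:ℝ)/6) := by
    rw [hy, one_div, ← Real.rpow_neg hb.le]
    norm_num
  rw [e1, e2, e3] at main
  exact main
lemma psum_aux (m : ℕ) : ∑ j ∈ Finset.Ico 1 (m+2), (j:ℝ) ^ (-(7:ℝ)/6)
    ≤ 7 - 6 * ((m:ℝ)+1) ^ (-(1:ℝ)/6) := by
  induction m with
  | zero =>
    rw [show Finset.Ico 1 2 = {1} from rfl]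
    simp [Real.one_rpow]
    norm_num
  | succ m ih =>
    rw [show m+1+2 = (m+2)+1 from rfl, Finset.sum_Ico_succ_top (by omega)]
    have hk := key_ineq ((m:ℝ)+1) (by { have : (0:ℝ) ≤ m := Nat.cast_nonneg m; linarith })
    have hc : ((m+2:ℕ):ℝ) = ((m:ℝ)+1)+1 := by push_cast; ring
    rw [hc]
    push_cast
    push_cast at ih hk
    linarith

lemma psum (n : ℕ) : ∑ j ∈ Finset.Ico 1 n, (j:ℝ) ^ (-(7:ℝ)/6) ≤ 7 := by
  match n with
  | 0 => simp
  | 1 => simp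
  | (m+2) =>
    refine (psum_aux m).trans ?_
    have : (0:ℝ) ≤ ((m:ℝ)+1) ^ (-(1:ℝ)/6) := Real.rpow_nonneg (by positivity) _
    linarith
lemma rpow_split (m : ℕ) (hm : 1 ≤ m) :
    (m:ℝ) ^ ((m:ℝ) - 2/3) = ((m:ℝ)^(m:ℕ) * Real.sqrt m) * (m:ℝ)^(-(7:ℝ)/6) := by
  have hmpos : (0:ℝ) < m := by exact_mod_cast hm
  rw [Real.sqrt_eq_rpow, ← Real.rpow_natCast (m:ℝ) m, ← Real.rpow_add hmpos,
    ← Real.rpow_add hmpos]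
  congr 1; ring

lemma term_bound (j k : ℕ) (hj : 1 ≤ j) (hk : 1 ≤ k) :
    ((j+k).choose j : ℝ) * (j:ℝ) ^ ((j:ℝ) - 2/3) * (k:ℝ) ^ ((k:ℝ) - 2/3)
      ≤ 2 * ((j:ℝ)+(k:ℝ)) ^ (((j:ℝ)+(k:ℝ)) + 1/2)
        * ((j:ℝ) ^ (-(7:ℝ)/6) * (k:ℝ) ^ (-(7:ℝ)/6)) := by
  have hjpos : (0:ℝ) < j := by exact_mod_cast hj
  have hkpos : (0:ℝ) < k := by exact_mod_cast hk
  have hnpos : (0:ℝ) < (j:ℝ)+(k:ℝ) := by linarith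
  have en : ((j:ℝ)+(k:ℝ)) ^ (((j:ℝ)+(k:ℝ)) + 1/2)
      = Real.sqrt ((j:ℝ)+(k:ℝ)) * ((j:ℝ)+(k:ℝ))^(j+k) := by
    rw [Real.sqrt_eq_rpow, ← Real.rpow_natCast ((j:ℝ)+(k:ℝ)) (j+k), ← Real.rpow_add hnpos]
    congr 1; push_cast; ring
  rw [rpow_split j hj, rpow_split k hk, en]
  have h := choose_bound j k hj hk
  have hnn : (0:ℝ) ≤ (j:ℝ) ^ (-(7:ℝ)/6) * (k:ℝ) ^ (-(7:ℝ)/6) := by positivity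
  calc ((j+k).choose j : ℝ) * (((j:ℝ)^(j:ℕ) * Real.sqrt j) * (j:ℝ)^(-(7:ℝ)/6))
        * (((k:ℝ)^(k:ℕ) * Real.sqrt k) * (k:ℝ)^(-(7:ℝ)/6))
      = (((j+k).choose j : ℝ) * (Real.sqrt j * Real.sqrt k) * ((j:ℝ)^j * (k:ℝ)^k))
        * ((j:ℝ) ^ (-(7:ℝ)/6) * (k:ℝ) ^ (-(7:ℝ)/6)) := by ring
    _ ≤ (2 * Real.sqrt ((j:ℝ)+(k:ℝ)) * ((j:ℝ)+(k:ℝ))^(j+k))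
        * ((j:ℝ) ^ (-(7:ℝ)/6) * (k:ℝ) ^ (-(7:ℝ)/6)) := mul_le_mul_of_nonneg_right h hnn
    _ = 2 * (Real.sqrt ((j:ℝ)+(k:ℝ)) * ((j:ℝ)+(k:ℝ))^(j+k))
        * ((j:ℝ) ^ (-(7:ℝ)/6) * (k:ℝ) ^ (-(7:ℝ)/6)) := by ring

/-- **Combinatorial lemma.** There is `C > 0`, independent of `n`, such that for every
`n ≥ 2`, `∑_{j=1}^{n-1} (n choose j) j^{j-2/3} (n-j)^{n-j-2/3} ≤ C n^{n-2/3}`. -/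
theorem binom_power_sum_bound :
    ∃ C > (0:ℝ), ∀ n : ℕ, 2 ≤ n →
      ∑ j ∈ Finset.Ico 1 n, (n.choose j : ℝ) * (j:ℝ) ^ ((j:ℝ) - 2/3)
          * ((n:ℝ) - (j:ℝ)) ^ ((n:ℝ) - (j:ℝ) - 2/3)
        ≤ C * (n:ℝ) ^ ((n:ℝ) - 2/3) := by
  refine ⟨28 * 2 ^ ((7:ℝ)/6), by positivity, ?_⟩
  intro n hn
  have hn0 : (0:ℝ) < n := by
    have : (2:ℝ) ≤ n := by exact_mod_cast hn
    linarith
  set A : ℝ := (n:ℝ) ^ ((n:ℝ) + 1/2) with hA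
  set B : ℝ := ((n:ℝ)/2) ^ (-(7:ℝ)/6) with hB
  have hApos : 0 < A := Real.rpow_pos_of_pos hn0 _
  have hBpos : 0 < B := Real.rpow_pos_of_pos (by linarith) _
  have hpt : ∀ j ∈ Finset.Ico 1 n,
      (n.choose j : ℝ) * (j:ℝ) ^ ((j:ℝ) - 2/3) * ((n:ℝ) - (j:ℝ)) ^ ((n:ℝ) - (j:ℝ) - 2/3)
      ≤ (2 * A * B) * ((j:ℝ) ^ (-(7:ℝ)/6) + ((n-j:ℕ):ℝ) ^ (-(7:ℝ)/6)) := by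
    intro j hj
    rw [Finset.mem_Ico] at hj
    obtain ⟨hj1, hj2⟩ := hj
    set k := n - j with hkdef
    have hk1 : 1 ≤ k := by omega
    have hjk : j + k = n := by omega
    have hjpos : (0:ℝ) < j := by exact_mod_cast hj1
    have hkpos : (0:ℝ) < k := by exact_mod_cast hk1
    have hcast : (n:ℝ) - (j:ℝ) = (k:ℝ) := by
      rw [hkdef]; push_cast [Nat.cast_sub hj2.le]; ring
    have hcastn : (j:ℝ) + (k:ℝ) = (n:ℝ) := by
      rw [← hjk]; push_cast; ring
    rw [hcast]
    have h1 := term_bound j k hj1 hk1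
    rw [hjk, hcastn] at h1
    refine h1.trans ?_
    rw [← hA]
    have hsplit : (j:ℝ) ^ (-(7:ℝ)/6) * (k:ℝ) ^ (-(7:ℝ)/6)
        ≤ B * ((j:ℝ) ^ (-(7:ℝ)/6) + (k:ℝ) ^ (-(7:ℝ)/6)) := by
      have hjnn : (0:ℝ) ≤ (j:ℝ) ^ (-(7:ℝ)/6) := Real.rpow_nonneg hjpos.le _
      have hknn : (0:ℝ) ≤ (k:ℝ) ^ (-(7:ℝ)/6) := Real.rpow_nonneg hkpos.le _
      rcases le_or_gt (n:ℝ) (2*(k:ℝ)) with hkk | hkk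
      · have h2 : (k:ℝ) ^ (-(7:ℝ)/6) ≤ B :=
          Real.rpow_le_rpow_of_nonpos (by linarith) (by linarith) (by norm_num)
        nlinarith
      · have hjj : (n:ℝ) ≤ 2*(j:ℝ) := by
          have : (j:ℝ) + (k:ℝ) = (n:ℝ) := hcastn
          linarith
        have h2 : (j:ℝ) ^ (-(7:ℝ)/6) ≤ B :=
          Real.rpow_le_rpow_of_nonpos (by linarith) (by linarith) (by norm_num)
        nlinarith
    calc 2 * A * ((j:ℝ) ^ (-(7:ℝ)/6) * (k:ℝ) ^ (-(7:ℝ)/6))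
        ≤ 2 * A * (B * ((j:ℝ) ^ (-(7:ℝ)/6) + (k:ℝ) ^ (-(7:ℝ)/6))) := by
          apply mul_le_mul_of_nonneg_left hsplit (by positivity)
      _ = (2 * A * B) * ((j:ℝ) ^ (-(7:ℝ)/6) + (k:ℝ) ^ (-(7:ℝ)/6)) := by ring
  have hrefl : ∑ j ∈ Finset.Ico 1 n, ((n-j:ℕ):ℝ) ^ (-(7:ℝ)/6)
      = ∑ j ∈ Finset.Ico 1 n, (j:ℝ) ^ (-(7:ℝ)/6) := by
    apply Finset.sum_nbij' (i := fun j => n - j) (j := fun j => n - j)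
    all_goals intros; simp_all [Finset.mem_Ico]; try omega
  have hsum : ∑ j ∈ Finset.Ico 1 n, ((j:ℝ) ^ (-(7:ℝ)/6) + ((n-j:ℕ):ℝ) ^ (-(7:ℝ)/6)) ≤ 14 := by
    rw [Finset.sum_add_distrib, hrefl]
    have := psum n
    linarith
  calc ∑ j ∈ Finset.Ico 1 n, (n.choose j : ℝ) * (j:ℝ) ^ ((j:ℝ) - 2/3)
          * ((n:ℝ) - (j:ℝ)) ^ ((n:ℝ) - (j:ℝ) - 2/3)
      ≤ ∑ j ∈ Finset.Ico 1 n, (2 * A * B) * ((j:ℝ) ^ (-(7:ℝ)/6) + ((n-j:ℕ):ℝ) ^ (-(7:ℝ)/6)) :=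
        Finset.sum_le_sum hpt
    _ = (2 * A * B) * ∑ j ∈ Finset.Ico 1 n, ((j:ℝ) ^ (-(7:ℝ)/6) + ((n-j:ℕ):ℝ) ^ (-(7:ℝ)/6)) :=
        (Finset.mul_sum _ _ _).symm
    _ ≤ (2 * A * B) * 14 := by
        apply mul_le_mul_of_nonneg_left hsum (by positivity)
    _ = 28 * 2 ^ ((7:ℝ)/6) * (n:ℝ) ^ ((n:ℝ) - 2/3) := by
        rw [hA, hB, Real.div_rpow hn0.le (by norm_num)]
        have e1 : (n:ℝ)^((n:ℝ)+1/2) * (n:ℝ)^(-(7:ℝ)/6) = (n:ℝ)^((n:ℝ)-2/3) := by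
          rw [← Real.rpow_add hn0]; congr 1; ring
        have e3 : (n:ℝ)^(-(7:ℝ)/6) / (2:ℝ)^(-(7:ℝ)/6)
            = (n:ℝ)^(-(7:ℝ)/6) * (2:ℝ)^((7:ℝ)/6) := by
          rw [div_eq_mul_inv, ← Real.rpow_neg (by norm_num : (0:ℝ) ≤ 2)]
          norm_num
        rw [e3]
        linear_combination (28:ℝ) * (2:ℝ)^((7:ℝ)/6) * e1
end

section
/- Let f and g be two smooth functions on ℝ and let n ≥ 1 be an integer. Then for all t ∈ ℝ, D^n(t^n f(t) g(t)) = Σ_{j=0}^{n} (n choose j) D^j(t^j f(t)) · D^{n−j}(t^{n−j} g(t)) − n Σ_{j=0}^{n−1} (n−1 choose j) D^j(t^j f(t)) · D^{n−1−j}(t^{n−1−j} g(t)), where D = d/dt. -/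
/-!
Write `A_j h = Dʲ(tʲ h)` and `θ = t D`. From `D^{j+1}(t u) = t D^{j+1} u + (j + 1) Dʲ u` we get
`A_{j+1} h = (θ + j + 1) A_j h`. Since `θ` is a derivation, Pascal's rule shows that the binomial
convolutions `S_n = ∑ (n choose j) A_j f · A_{n-j} g` satisfy `S_{n+1} = (θ + n + 2) S_n`.
Hence `S_n - n S_{n-1}` obeys the same recursion `A_{n+1}(fg) = (θ + n + 1) A_n(fg)` as `A_n(fg)`,
and the two agree by induction on `n`.
-/

open Finset

open scoped ContDiff

section BinomialConvolution

variable {R : Type*}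

def binomConv [CommSemiring R] (a b : ℕ → R) (n : ℕ) : R :=
  ∑ i ∈ range (n + 1), (n.choose i : R) * (a i * b (n - i))

theorem binomConv_succ [CommRing R] {a a' b b' : ℕ → R} {t : R}
    (ha : ∀ j, a (j + 1) = t * a' j + (j + 1) * a j)
    (hb : ∀ k, b (k + 1) = t * b' k + (k + 1) * b k) (n : ℕ) :
    binomConv a b (n + 1) =
      t * (binomConv a' b n + binomConv a b' n) + (n + 2) * binomConv a b n := by
  have hterm : ∀ i ∈ range (n + 1), a i * b (n + 1 - i) + a (i + 1) * b (n - i) =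
      t * (a' i * b (n - i) + a i * b' (n - i)) + (n + 2) * (a i * b (n - i)) := by
    intro i hi
    have hin : i ≤ n := Nat.lt_succ_iff.mp (mem_range.mp hi)
    rw [Nat.sub_add_comm hin, ha, hb, Nat.cast_sub hin]
    ring
  rw [binomConv, sum_choose_succ_mul (fun i j => a i * b j), ← sum_add_distrib]
  simp only [binomConv, ← sum_add_distrib, mul_sum]
  refine sum_congr rfl fun i hi => ?_
  linear_combination (n.choose i : R) * hterm i hi

end BinomialConvolution

section Calculus

variable {𝕜 : Type*} [NontriviallyNormedField 𝕜]

theorem iteratedDeriv_succ_id_mul {h : 𝕜 → 𝕜} (hh : ContDiff 𝕜 ∞ h) (m : ℕ) :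
    iteratedDeriv (m + 1) (fun s => s * h s) =
      fun t => t * iteratedDeriv (m + 1) h t + (m + 1) * iteratedDeriv m h t := by
  have hD (k : ℕ) : Differentiable 𝕜 (iteratedDeriv k h) :=
    hh.differentiable_iteratedDeriv k (by exact_mod_cast WithTop.coe_lt_top _)
  induction m with
  | zero =>
    ext t
    rw [iteratedDeriv_one,
      ((hasDerivAt_id' t).fun_mul (hh.differentiable (by simp) t).hasDerivAt).deriv]
    simp only [zero_add, iteratedDeriv_zero, iteratedDeriv_one, Nat.cast_zero]
    ring
  | succ m ih =>
    ext t
    rw [iteratedDeriv_succ, ih, (((hasDerivAt_id' t).fun_mul (hD (m + 1) t).hasDerivAt).fun_add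
      ((hD m t).hasDerivAt.const_mul _)).deriv]
    simp only [iteratedDeriv_succ, Nat.cast_add, Nat.cast_one]
    ring

theorem hasDerivAt_binomConv {a b : ℕ → 𝕜 → 𝕜} {a' b' : ℕ → 𝕜} {t : 𝕜}
    (ha : ∀ j, HasDerivAt (a j) (a' j) t) (hb : ∀ k, HasDerivAt (b k) (b' k) t) (n : ℕ) :
    HasDerivAt (fun u => binomConv (a · u) (b · u) n)
      (binomConv a' (b · t) n + binomConv (a · t) b' n) t := by
  simpa only [binomConv, mul_add, sum_add_distrib] using
    HasDerivAt.fun_sum (u := range (n + 1))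
      fun i _ => ((ha i).fun_mul (hb (n - i))).const_mul (n.choose i : 𝕜)

noncomputable def powDeriv (f : 𝕜 → 𝕜) (j : ℕ) : 𝕜 → 𝕜 :=
  iteratedDeriv j fun s => s ^ j * f s

variable {f g : 𝕜 → 𝕜}

theorem differentiable_powDeriv (hf : ContDiff 𝕜 ∞ f) (j : ℕ) :
    Differentiable 𝕜 (powDeriv f j) :=
  ((contDiff_id.pow j).mul hf).differentiable_iteratedDeriv j
    (by exact_mod_cast WithTop.coe_lt_top _)

theorem powDeriv_succ (hf : ContDiff 𝕜 ∞ f) (j : ℕ) (t : 𝕜) :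
    powDeriv f (j + 1) t = t * deriv (powDeriv f j) t + (j + 1) * powDeriv f j t := by
  have hshift : (fun s => s ^ (j + 1) * f s) = fun s => s * (s ^ j * f s) := by
    ext s; ring
  have hsmooth : ContDiff 𝕜 ∞ fun s => s ^ j * f s := (contDiff_id.pow j).mul hf
  rw [powDeriv, hshift, iteratedDeriv_succ_id_mul hsmooth, iteratedDeriv_succ]
  rfl

theorem powDeriv_mul (hf : ContDiff 𝕜 ∞ f) (hg : ContDiff 𝕜 ∞ g) (n : ℕ) (t : 𝕜) :
    powDeriv (fun s => f s * g s) n t =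
      binomConv (powDeriv f · t) (powDeriv g · t) n
        - n * binomConv (powDeriv f · t) (powDeriv g · t) (n - 1) := by
  induction n generalizing t with
  | zero => simp [powDeriv, binomConv]
  | succ n ih =>
    set C : ℕ → 𝕜 := fun k => binomConv (powDeriv f · t) (powDeriv g · t) k
    set D : ℕ → 𝕜 := fun k => binomConv (fun j => deriv (powDeriv f j) t) (powDeriv g · t) k
        + binomConv (powDeriv f · t) (fun j => deriv (powDeriv g j) t) k
    have hderiv (k : ℕ) := hasDerivAt_binomConv
      (fun j => (differentiable_powDeriv hf j t).hasDerivAt)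
      (fun j => (differentiable_powDeriv hg j t).hasDerivAt) k
    have hrec (k : ℕ) : C (k + 1) = t * D k + (k + 2) * C k :=
      binomConv_succ (fun j => powDeriv_succ hf j t) (fun j => powDeriv_succ hg j t) k
    have hrec_pred : (n : 𝕜) * (t * D (n - 1)) = n * (C n - (n + 1) * C (n - 1)) := by
      rcases n with _ | m
      · simp
      · rw [Nat.add_sub_cancel, hrec m]; push_cast; ring
    rw [powDeriv_succ (hf.mul hg), funext ih,
      ((hderiv n).fun_sub ((hderiv (n - 1)).const_mul _)).deriv, Nat.add_sub_cancel]
    push_cast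
    linear_combination -hrec n - hrec_pred

end Calculus

theorem modified_leibniz_general (f g : ℝ → ℝ) (hf : ContDiff ℝ (⊤ : ℕ∞) f)
    (hg : ContDiff ℝ (⊤ : ℕ∞) g) (n : ℕ) (t : ℝ) :
    iteratedDeriv n (fun s => s^n * f s * g s) t =
      (∑ j ∈ Finset.range (n+1), (n.choose j : ℝ) *
        (iteratedDeriv j (fun s => s^j * f s) t *
          iteratedDeriv (n-j) (fun s => s^(n-j) * g s) t))
      - (n:ℝ) * ∑ j ∈ Finset.range n, ((n-1).choose j : ℝ) *
        (iteratedDeriv j (fun s => s^j * f s) t *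
          iteratedDeriv (n-1-j) (fun s => s^(n-1-j) * g s) t) := by
  have hassoc : (fun s => s ^ n * f s * g s) = fun s => s ^ n * (f s * g s) := by
    ext s; ring
  rw [hassoc]
  rcases n with _ | n
  · simp
  · exact powDeriv_mul hf hg (n + 1) t

/-- **Modified Leibniz rule.** For smooth `f, g : ℝ → ℝ` and `n ≥ 1`,
`Dⁿ(tⁿ f g) = ∑_{j=0}^n (n choose j) Dʲ(tʲ f) D^{n-j}(t^{n-j} g)
 - n ∑_{j=0}^{n-1} (n-1 choose j) Dʲ(tʲ f) D^{n-1-j}(t^{n-1-j} g)`. -/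
theorem modified_leibniz (f g : ℝ → ℝ) (hf : ContDiff ℝ (⊤ : ℕ∞) f)
    (hg : ContDiff ℝ (⊤ : ℕ∞) g) (n : ℕ) (hn : 1 ≤ n) (t : ℝ) :
    iteratedDeriv n (fun s => s^n * f s * g s) t =
      (∑ j ∈ Finset.range (n+1), (n.choose j : ℝ) *
        (iteratedDeriv j (fun s => s^j * f s) t *
          iteratedDeriv (n-j) (fun s => s^(n-j) * g s) t))
      - (n:ℝ) * ∑ j ∈ Finset.range n, ((n-1).choose j : ℝ) *
        (iteratedDeriv j (fun s => s^j * f s) t *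
          iteratedDeriv (n-1-j) (fun s => s^(n-1-j) * g s) t) :=
  modified_leibniz_general f g hf hg n t
end

section
/- Let Γ(t,x) = (4πt)^{−d/2} e^{−|x|²/(4t)} be the heat kernel on ℝ^d. There exists a constant C₀ ≥ 1 depending only on d such that for every integer k ≥ 1 and every t > 0, the L¹(ℝ^d) norm in x of the k-th time derivative of Γ satisfies ‖∂_t^k Γ(t,·)‖_{L¹(ℝ^d)} ≤ C₀^{k+1} k^{k−2/3} t^{−k}. -/
open Real MeasureTheory

/-- The Gauss–Weierstrass heat kernel on `ℝ^d`. -/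
noncomputable def heatKer (d : ℕ) (t : ℝ) (x : EuclideanSpace ℝ (Fin d)) : ℝ :=
  (4 * Real.pi * t) ^ (-(d:ℝ)/2) * Real.exp (-‖x‖^2 / (4*t))

namespace HeatKerAux

open Complex

/-- Complex extension of the heat kernel in time. -/
noncomputable def Fc (d : ℕ) (a : ℝ) (z : ℂ) : ℂ :=
  (4 * (π:ℂ) * z) ^ (-(d:ℂ)/2) * Complex.exp (-(a:ℂ)/z)

lemma Fc_diff (d : ℕ) (a : ℝ) {z : ℂ} (hz : 0 < z.re) : DifferentiableAt ℂ (Fc d a) z := by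
  have hz0 : z ≠ 0 := by intro h; rw [h] at hz; simp at hz
  have h1 : DifferentiableAt ℂ (fun z : ℂ => (4 * (π:ℂ) * z) ^ (-(d:ℂ)/2)) z := by
    apply DifferentiableAt.cpow
    · fun_prop
    · exact differentiableAt_const _
    · refine Complex.mem_slitPlane_iff.2 (Or.inl ?_)
      have : (4 * (π:ℂ) * z).re = 4 * π * z.re := by
        simp [Complex.mul_re]
      rw [this]; positivity
  have h2 : DifferentiableAt ℂ (fun z : ℂ => Complex.exp (-(a:ℂ)/z)) z := by
    apply Complex.differentiableAt_exp.comp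
    exact (differentiableAt_const _).div differentiableAt_id hz0
  exact h1.mul h2

lemma mem_ball_re {t : ℝ} (ht : 0 < t) {z : ℂ} (hz : z ∈ Metric.closedBall (t:ℂ) (t/2)) :
    t/2 ≤ z.re := by
  have hdist : ‖z - (t:ℂ)‖ ≤ t/2 := by
    simpa [Metric.mem_closedBall, dist_eq_norm] using hz
  have h1 : |(z - (t:ℂ)).re| ≤ t/2 := by
    refine le_trans (Complex.abs_re_le_norm _) hdist
  have h2 : (z - (t:ℂ)).re = z.re - t := by simp
  rw [h2] at h1
  have := (abs_le.1 h1).1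
  linarith

lemma Fc_bound (d : ℕ) (a t : ℝ) (ha : 0 ≤ a) (ht : 0 < t) {z : ℂ}
    (hz : z ∈ Metric.closedBall (t:ℂ) (t/2)) :
    ‖Fc d a z‖ ≤ (2*π*t) ^ (-(d:ℝ)/2) * Real.exp (-2*a/(9*t)) := by
  have hdist : ‖z - (t:ℂ)‖ ≤ t/2 := by
    simpa [Metric.mem_closedBall, dist_eq_norm] using hz
  have hre : t/2 ≤ z.re := mem_ball_re ht hz
  have habs : ‖z‖ ≤ 3*t/2 := by
    calc ‖z‖ = ‖z‖ := rfl
      _ ≤ ‖z - (t:ℂ)‖ + ‖(t:ℂ)‖ := by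
          simpa using norm_sub_le (z - t) (-(t:ℂ))
      _ ≤ t/2 + t := by
          have : ‖(t:ℂ)‖ = |t| := Complex.norm_real t
          rw [this, abs_of_pos ht]; linarith
      _ = 3*t/2 := by ring
  have hzre : 0 < z.re := lt_of_lt_of_le (by positivity) hre
  have hz0 : z ≠ 0 := fun h => by rw [h] at hzre; simp at hzre
  have hnsq : Complex.normSq z ≤ 9*t^2/4 := by
    rw [Complex.normSq_eq_norm_sq]
    nlinarith [norm_nonneg z]
  have hnsq0 : 0 < Complex.normSq z := Complex.normSq_pos.2 hz0
  unfold Fc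
  rw [norm_mul]
  have h1 : ‖(4 * (π:ℂ) * z) ^ (-(d:ℂ)/2)‖ ≤ (2*π*t) ^ (-(d:ℝ)/2) := by
    have he : (-(d:ℂ)/2) = ((-(d:ℝ)/2 : ℝ) : ℂ) := by push_cast; ring
    rw [he, Complex.norm_cpow_real]
    have habs4 : 2*π*t ≤ ‖4 * (π:ℂ) * z‖ := by
      rw [norm_mul, norm_mul]
      have h4 : ‖(4:ℂ)‖ = 4 := by norm_num
      have hpi : ‖(π:ℂ)‖ = π := by
        rw [Complex.norm_real, Real.norm_eq_abs, abs_of_pos Real.pi_pos]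
      rw [h4, hpi]
      have hy : t/2 ≤ ‖z‖ :=
        le_trans hre (le_trans (le_abs_self _) (Complex.abs_re_le_norm z))
      nlinarith [Real.pi_pos]
    have hexp : -(d:ℝ)/2 ≤ 0 := by
      have : (0:ℝ) ≤ (d:ℝ) := Nat.cast_nonneg d
      linarith
    exact Real.rpow_le_rpow_of_nonpos (by positivity) habs4 hexp
  have h2 : ‖Complex.exp (-(a:ℂ)/z)‖ ≤ Real.exp (-2*a/(9*t)) := by
    rw [Complex.norm_exp]
    apply Real.exp_le_exp.2
    have hrequot : (-(a:ℂ)/z).re = -a * z.re / Complex.normSq z := by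
      rw [Complex.div_re]
      simp [Complex.ofReal_re]
    rw [hrequot]
    have key : 2*a/(9*t) ≤ a*z.re/Complex.normSq z := by
      have heq : 2*a/(9*t) = (a*(t/2))/(9*t^2/4) := by
        field_simp; ring
      rw [heq]
      exact div_le_div₀ (by positivity) (mul_le_mul_of_nonneg_left hre ha) hnsq0 hnsq
    have e1 : -a * z.re / Complex.normSq z = -(a*z.re/Complex.normSq z) := by ring
    have e2 : -2*a/(9*t) = -(2*a/(9*t)) := by ring
    rw [e1, e2]
    exact neg_le_neg key
  calc ‖(4 * (π:ℂ) * z) ^ (-(d:ℂ)/2)‖ * ‖Complex.exp (-(a:ℂ)/z)‖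
      ≤ (2*π*t) ^ (-(d:ℝ)/2) * Real.exp (-2*a/(9*t)) :=
        mul_le_mul h1 h2 (norm_nonneg _) (by positivity)

theorem cauchy_est (f : ℂ → ℂ) (c : ℂ) (R M : ℝ) (hR : 0 < R)
    (hd : DifferentiableOn ℂ f (Metric.closedBall c R))
    (hb : ∀ z ∈ Metric.closedBall c R, ‖f z‖ ≤ M) (n : ℕ) :
    ‖iteratedDeriv n f c‖ ≤ n.factorial * M / R ^ n := by
  lift R to NNReal using hR.le
  have hR' : (0 : NNReal) < R := by exact_mod_cast hR
  have h := hd.hasFPowerSeriesOnBall hR'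
  have h2 := h.factorial_smul (1 : ℂ) n
  have h1 : iteratedDeriv n f c = n.factorial • cauchyPowerSeries f c R n (fun _ => 1) := by
    rw [iteratedDeriv_eq_iteratedFDeriv, ← h2]
  rw [h1]
  have h3 : ‖cauchyPowerSeries f c R n (fun _ => 1)‖ ≤ M * (R:ℝ)⁻¹ ^ n := by
    refine le_trans ((cauchyPowerSeries f c R n).le_opNorm _) ?_
    have hle := norm_cauchyPowerSeries_le f c R n
    have hint : (2 * π)⁻¹ * ∫ θ : ℝ in (0)..2 * π, ‖f (circleMap c R θ)‖ ≤ M := by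
      have hI : ∫ θ : ℝ in (0)..2 * π, ‖f (circleMap c R θ)‖ ≤ ∫ θ : ℝ in (0)..2 * π, M := by
        apply intervalIntegral.integral_mono_on Real.two_pi_pos.le
        · apply ContinuousOn.intervalIntegrable
          exact ((hd.continuousOn.comp (continuous_circleMap c R).continuousOn
            (fun θ _ => circleMap_mem_closedBall c hR.le θ)).norm)
        · exact intervalIntegrable_const
        · exact fun θ _ => hb _ (circleMap_mem_closedBall c hR.le θ)
      rw [intervalIntegral.integral_const, sub_zero, smul_eq_mul] at hI
      calc (2 * π)⁻¹ * ∫ θ : ℝ in (0)..2 * π, ‖f (circleMap c R θ)‖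
          ≤ (2 * π)⁻¹ * (2 * π * M) := by
            apply mul_le_mul_of_nonneg_left hI (by positivity)
        _ = M := by field_simp
    calc ‖cauchyPowerSeries f c R n‖ * ∏ _i : Fin n, ‖(1:ℂ)‖
        = ‖cauchyPowerSeries f c R n‖ := by simp
      _ ≤ ((2 * π)⁻¹ * ∫ θ : ℝ in (0)..2 * π, ‖f (circleMap c R θ)‖) * |(R:ℝ)|⁻¹ ^ n := hle
      _ ≤ M * (R:ℝ)⁻¹ ^ n := by
          rw [_root_.abs_of_nonneg R.coe_nonneg]
          refine mul_le_mul_of_nonneg_right hint (by positivity)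
  calc ‖n.factorial • cauchyPowerSeries f c R n (fun _ => 1)‖
      = n.factorial * ‖cauchyPowerSeries f c R n (fun _ => 1)‖ := by
        rw [nsmul_eq_mul]; rw [norm_mul]; simp
    _ ≤ n.factorial * (M * (R:ℝ)⁻¹ ^ n) := by
        apply mul_le_mul_of_nonneg_left h3 (by positivity)
    _ = n.factorial * M / (R:ℝ) ^ n := by rw [inv_pow]; ring

lemma bridge (d : ℕ) (x : EuclideanSpace ℝ (Fin d)) (k : ℕ) :
    ∀ t : ℝ, 0 < t →
      ((deriv^[k] (fun s => heatKer d s x) t : ℝ) : ℂ)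
        = iteratedDeriv k (Fc d (‖x‖^2/4)) t := by
  induction k with
  | zero =>
    intro t ht
    simp only [Function.iterate_zero, id_eq, iteratedDeriv_zero]
    unfold heatKer Fc
    rw [Complex.ofReal_mul, Complex.ofReal_cpow (by positivity : (0:ℝ) ≤ 4 * π * t),
      Complex.ofReal_exp]
    congr 2
    · push_cast; ring
    · push_cast; ring
    · push_cast; ring
  | succ k ih =>
    intro t ht
    set G := iteratedDeriv k (Fc d (‖x‖^2/4)) with hG
    have hGdiff : ∀ z : ℂ, 0 < z.re → DifferentiableAt ℂ G z := by
      intro z hz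
      have hU : IsOpen {w : ℂ | 0 < w.re} :=
        isOpen_lt continuous_const Complex.continuous_re
      have han : AnalyticOnNhd ℂ (Fc d (‖x‖^2/4)) {w : ℂ | 0 < w.re} := by
        apply DifferentiableOn.analyticOnNhd _ hU
        exact fun w hw => (Fc_diff d _ hw).differentiableWithinAt
      rw [hG, iteratedDeriv_eq_iterate]
      exact ((han.iterated_deriv k) z hz).differentiableAt
    have hGt : HasDerivAt (fun s : ℝ => G s) (deriv G t) t :=
      ((hGdiff t (by simpa using ht)).hasDerivAt).comp_ofReal
    have hev : ∀ᶠ s in nhds t, ((deriv^[k] (fun s => heatKer d s x) s : ℝ) : ℂ) = G s := by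
      filter_upwards [eventually_gt_nhds ht] with s hs using ih s hs
    have hre : HasDerivAt (deriv^[k] (fun s => heatKer d s x)) ((deriv G t).re) t := by
      have h1 : HasDerivAt (fun s : ℝ => (G s).re) ((deriv G t).re) t :=
        Complex.reCLM.hasFDerivAt.comp_hasDerivAt t hGt
      apply h1.congr_of_eventuallyEq
      filter_upwards [hev] with s hs
      rw [← hs]; simp
    have him : (deriv G t).im = 0 := by
      have h1 : HasDerivAt (fun s : ℝ => (G s).im) ((deriv G t).im) t :=
        Complex.imCLM.hasFDerivAt.comp_hasDerivAt t hGt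
      have h2 : HasDerivAt (fun _ : ℝ => (0:ℝ)) ((deriv G t).im) t := by
        apply h1.congr_of_eventuallyEq
        filter_upwards [hev] with s hs
        rw [← hs]; simp
      simpa using h2.deriv.symm
    rw [Function.iterate_succ_apply', iteratedDeriv_succ, hre.deriv]
    exact (Complex.ext (by rw [← hG]; simp) (by rw [← hG]; simp [him])).symm

end HeatKerAux

/-- There is `C₀ ≥ 1` depending only on `d` such that for every integer `k ≥ 1` and
`t > 0`, `‖∂ₜᵏ Γ(t,·)‖_{L¹(ℝ^d)} ≤ C₀^{k+1} k^{k-2/3} t^{-k}`. -/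
theorem heat_kernel_time_deriv_L1 (d : ℕ) :
    ∃ C₀ ≥ (1:ℝ), ∀ k : ℕ, 1 ≤ k → ∀ t : ℝ, 0 < t →
      (∫ x : EuclideanSpace ℝ (Fin d), |deriv^[k] (fun s => heatKer d s x) t|)
        ≤ C₀^(k+1) * (k:ℝ) ^ ((k:ℝ) - 2/3) * t ^ (-(k:ℝ)) := by
  classical
  have h3d : (1:ℝ) ≤ 3^d := one_le_pow₀ (by norm_num)
  refine ⟨4 * 3^d, by nlinarith, ?_⟩
  intro k hk t ht
  set b : ℝ := 1/(18*t) with hb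
  have hbpos : 0 < b := by positivity
  set K : ℝ := k.factorial * (2*π*t) ^ (-(d:ℝ)/2) * (2/t)^k with hK
  have hKpos : 0 < K := by
    have : (0:ℝ) < k.factorial := by exact_mod_cast k.factorial_pos
    positivity
  -- pointwise bound
  have key : ∀ x : EuclideanSpace ℝ (Fin d),
      |deriv^[k] (fun s => heatKer d s x) t| ≤ K * Real.exp (-b * ‖x‖^2) := by
    intro x
    set a : ℝ := ‖x‖^2/4 with ha
    have ha0 : 0 ≤ a := by positivity
    have habs : |deriv^[k] (fun s => heatKer d s x) t|
        = ‖iteratedDeriv k (HeatKerAux.Fc d a) t‖ := by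
      rw [← HeatKerAux.bridge d x k t ht]
      simp [Complex.norm_real]
    rw [habs]
    have hdiff : DifferentiableOn ℂ (HeatKerAux.Fc d a) (Metric.closedBall (t:ℂ) (t/2)) := by
      intro z hz
      exact (HeatKerAux.Fc_diff d a (lt_of_lt_of_le (by positivity)
        (HeatKerAux.mem_ball_re ht hz))).differentiableWithinAt
    have hbound := HeatKerAux.cauchy_est (HeatKerAux.Fc d a) t (t/2)
      ((2*π*t) ^ (-(d:ℝ)/2) * Real.exp (-2*a/(9*t))) (by positivity) hdiff
      (fun z hz => HeatKerAux.Fc_bound d a t ha0 ht hz) k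
    refine hbound.trans (le_of_eq ?_)
    have hexp : -2*a/(9*t) = -b * ‖x‖^2 := by
      rw [ha, hb]; field_simp; ring
    rw [hK, hexp]
    field_simp
    rw [← mul_pow, show t/2*(2/t) = 1 by field_simp, one_pow]
  -- integrability of the majorant
  have hint : Integrable (fun x : EuclideanSpace ℝ (Fin d) => K * Real.exp (-b * ‖x‖^2)) := by
    apply Integrable.const_mul
    have hc : Integrable (fun x : EuclideanSpace ℝ (Fin d) =>
        Complex.exp (-(b:ℂ) * ‖x‖^2
          + 0 * ((inner ℝ (0 : EuclideanSpace ℝ (Fin d)) x : ℝ) : ℂ))) :=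
      GaussianFourier.integrable_cexp_neg_mul_sq_norm_add (by simpa using hbpos) 0 0
    have := hc.norm
    refine this.congr (Filter.Eventually.of_forall fun x => ?_)
    simp only [zero_mul, add_zero, Complex.norm_exp]
    congr 1
    have hcast : -(b:ℂ) * (‖x‖:ℂ)^2 = ((-b * ‖x‖^2 : ℝ) : ℂ) := by push_cast; ring
    rw [hcast, Complex.ofReal_re]
  -- integral comparison
  have hcomp := integral_mono_of_nonneg
    (Filter.Eventually.of_forall fun x => abs_nonneg (deriv^[k] (fun s => heatKer d s x) t))
    hint (Filter.Eventually.of_forall key)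
  refine hcomp.trans ?_
  rw [integral_const_mul]
  have hgauss : ∫ x : EuclideanSpace ℝ (Fin d), Real.exp (-b * ‖x‖^2)
      = (π/b) ^ ((d:ℝ)/2) := by
    rw [GaussianFourier.integral_rexp_neg_mul_sq_norm hbpos]
    congr 1
    simp [finrank_euclideanSpace_fin]
  rw [hgauss]
  -- now pure arithmetic
  have hpib : π / b = 18*π*t := by rw [hb]; field_simp
  rw [hpib, hK]
  have h9 : (18*π*t)/(2*π*t) = 9 := by
    field_simp
    ring
  have h93 : (9:ℝ) = (3:ℝ)^(2:ℝ) := by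
    rw [show (2:ℝ) = ((2:ℕ):ℝ) by norm_num, Real.rpow_natCast]; norm_num
  have hcancel : (2*π*t) ^ (-(d:ℝ)/2) * (18*π*t) ^ ((d:ℝ)/2) = 3^d := by
    rw [neg_div, Real.rpow_neg (by positivity)]
    calc ((2*π*t) ^ ((d:ℝ)/2))⁻¹ * (18*π*t) ^ ((d:ℝ)/2)
        = ((18*π*t)/(2*π*t)) ^ ((d:ℝ)/2) := by
          rw [Real.div_rpow (by positivity) (by positivity : (0:ℝ) ≤ 2*π*t)]
          ring
      _ = (9:ℝ) ^ ((d:ℝ)/2) := by rw [h9]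
      _ = (3:ℝ) ^ ((2:ℝ) * ((d:ℝ)/2)) := by rw [h93, ← Real.rpow_mul (by norm_num)]
      _ = (3:ℝ) ^ d := by
          rw [show (2:ℝ) * ((d:ℝ)/2) = ((d:ℕ):ℝ) by push_cast; ring, Real.rpow_natCast]
  have hregroup : (k.factorial:ℝ) * (2*π*t) ^ (-(d:ℝ)/2) * (2/t)^k * (18*π*t) ^ ((d:ℝ)/2)
      = (k.factorial:ℝ) * ((2*π*t) ^ (-(d:ℝ)/2) * (18*π*t) ^ ((d:ℝ)/2)) * (2/t)^k := by
    ring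
  rw [hregroup, hcancel]
  -- reduce t powers
  have htk : t ^ (-(k:ℝ)) = (t^k)⁻¹ := by
    rw [Real.rpow_neg ht.le, Real.rpow_natCast]
  have h2t : (2/t)^k = 2^k * (t^k)⁻¹ := by
    rw [div_pow, div_eq_mul_inv]
  rw [htk, h2t]
  have htkpos : (0:ℝ) < (t^k)⁻¹ := by positivity
  have hnum : (k.factorial:ℝ) * 3^d * 2^k ≤ (4*3^d)^(k+1) * (k:ℝ)^((k:ℝ)-2/3) := by
    have hk1 : (1:ℝ) ≤ (k:ℝ) := by exact_mod_cast hk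
    have hkpos : (0:ℝ) < (k:ℝ) := by linarith
    have hfac : (k.factorial:ℝ) ≤ (k:ℝ)^(k:ℕ) := by exact_mod_cast Nat.factorial_le_pow k
    have hkk : (k:ℝ)^(k:ℕ) = (k:ℝ)^((k:ℝ)-2/3) * (k:ℝ)^((2:ℝ)/3) := by
      rw [← Real.rpow_natCast (k:ℝ) k, ← Real.rpow_add hkpos]
      congr 1
      ring
    have h23 : (k:ℝ)^((2:ℝ)/3) ≤ (k:ℝ) := by
      calc (k:ℝ)^((2:ℝ)/3) ≤ (k:ℝ)^(1:ℝ) :=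
            Real.rpow_le_rpow_of_exponent_le hk1 (by norm_num)
        _ = (k:ℝ) := Real.rpow_one _
    have hk2 : (k:ℝ) ≤ 2^k := by exact_mod_cast (Nat.lt_two_pow_self (n := k)).le
    have hrpow_nonneg : (0:ℝ) ≤ (k:ℝ)^((k:ℝ)-2/3) := Real.rpow_nonneg hkpos.le _
    have h1 : (k.factorial:ℝ) ≤ (k:ℝ)^((k:ℝ)-2/3) * 2^k := by
      refine hfac.trans ?_
      rw [hkk]
      exact mul_le_mul_of_nonneg_left (h23.trans hk2) hrpow_nonneg
    have h4k : ((2:ℝ)^k * 2^k) = 4^k := by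
      rw [← mul_pow]; norm_num
    have hC : (4:ℝ)^k * 3^d ≤ (4*3^d)^(k+1) := by
      have e1 : ((4:ℝ)*3^d)^(k+1) = (4*3^d)^k * (4*3^d) := pow_succ _ _
      have e2 : (4:ℝ)^k ≤ (4*3^d)^k := by
        apply pow_le_pow_left₀ (by norm_num)
        nlinarith
      have e3 : (3:ℝ)^d ≤ 4*3^d := by nlinarith
      rw [e1]
      exact mul_le_mul e2 e3 (by positivity) (by positivity)
    calc (k.factorial:ℝ) * 3^d * 2^k
        ≤ ((k:ℝ)^((k:ℝ)-2/3) * 2^k) * 3^d * 2^k := by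
          refine mul_le_mul_of_nonneg_right
            (mul_le_mul_of_nonneg_right h1 (by positivity)) (by positivity)
      _ = (4^k * 3^d) * (k:ℝ)^((k:ℝ)-2/3) := by rw [← h4k]; ring
      _ ≤ (4*3^d)^(k+1) * (k:ℝ)^((k:ℝ)-2/3) :=
          mul_le_mul_of_nonneg_right hC hrpow_nonneg
  calc (k.factorial:ℝ) * 3^d * (2^k * (t^k)⁻¹)
      = ((k.factorial:ℝ) * 3^d * 2^k) * (t^k)⁻¹ := by ring
    _ ≤ ((4*3^d)^(k+1) * (k:ℝ)^((k:ℝ)-2/3)) * (t^k)⁻¹ :=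
        mul_le_mul_of_nonneg_right hnum htkpos.le
    _ = (4*3^d)^(k+1) * (k:ℝ)^((k:ℝ)-2/3) * (t^k)⁻¹ := by ring
end

section
/- Let Γ(t,x) = (4πt)^{−d/2} e^{−|x|²/(4t)} be the heat kernel on ℝ^d. There exists a constant C₁ ≥ 1 depending only on d such that for every integer k ≥ 1 and every t > 0, ‖∂_t^k ( t^k Γ(t,·) )‖_{L¹(ℝ^d)} ≤ C₁^{k+1} k^{k−2/3}, where ∂_t^k(t^k Γ) denotes the k-th time derivative of the function (t,x) ↦ t^k Γ(t,x). -/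
open Real MeasureTheory

/-- Cauchy estimate for iterated derivatives. -/
lemma cauchy_bound {f : ℂ → ℂ} {c : ℂ} {R M : ℝ} (hR : 0 < R) (hM : 0 ≤ M)
    (hf : DifferentiableOn ℂ f (Metric.closedBall c R))
    (hb : ∀ z ∈ Metric.sphere c R, ‖f z‖ ≤ M) (n : ℕ) :
    ‖iteratedDeriv n f c‖ ≤ (n.factorial : ℝ) * M / R ^ n := by
  lift R to NNReal using hR.le with R' hR'
  have hR0 : (0:ℝ) < R' := hR
  have h := hf.hasFPowerSeriesOnBall (R := R') hR0
  have h1 : iteratedDeriv n f c = (n.factorial : ℂ) * (cauchyPowerSeries f c R' n fun _ => (1:ℂ)) := by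
    rw [iteratedDeriv, ← h.factorial_smul 1 n, nsmul_eq_mul]
  have h2 : ‖cauchyPowerSeries f c R' n fun _ => (1:ℂ)‖ ≤ ‖cauchyPowerSeries f c R' n‖ := by
    simpa using (cauchyPowerSeries f c R' n).le_opNorm fun _ => (1:ℂ)
  have hcont : Continuous fun θ : ℝ => ‖f (circleMap c R' θ)‖ := by
    apply Continuous.norm
    rw [← continuousOn_univ]
    exact hf.continuousOn.comp (continuous_circleMap c R').continuousOn
      fun θ _ => Metric.sphere_subset_closedBall (circleMap_mem_sphere c hR0.le θ)
  have hint : (∫ θ : ℝ in (0)..2 * π, ‖f (circleMap c R' θ)‖) ≤ 2 * π * M := by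
    calc (∫ θ : ℝ in (0)..2 * π, ‖f (circleMap c R' θ)‖)
        ≤ ∫ _ : ℝ in (0)..2 * π, M := by
          apply intervalIntegral.integral_mono_on Real.two_pi_pos.le
            (hcont.intervalIntegrable 0 (2*π)) intervalIntegrable_const
          exact fun θ _ => hb _ (circleMap_mem_sphere c hR0.le θ)
      _ = 2 * π * M := by simp [mul_comm]
  have h3 := norm_cauchyPowerSeries_le f c R' n
  rw [h1]
  rw [norm_mul, Complex.norm_natCast]
  have h4 : ‖cauchyPowerSeries f c R' n‖ ≤ M * ((R':ℝ)⁻¹) ^ n := by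
    refine h3.trans ?_
    have habs : |(R':ℝ)| = (R':ℝ) := abs_of_nonneg hR0.le
    rw [habs, inv_pow]
    have key : (2 * π)⁻¹ * (∫ θ : ℝ in (0)..2 * π, ‖f (circleMap c R' θ)‖) ≤ M := by
      have h5 : (2 * π)⁻¹ * (∫ θ : ℝ in (0)..2 * π, ‖f (circleMap c R' θ)‖)
          ≤ (2 * π)⁻¹ * (2 * π * M) := by
        apply mul_le_mul_of_nonneg_left hint
        positivity
      refine h5.trans (le_of_eq ?_)
      field_simp
    gcongr
  calc (n.factorial : ℝ) * ‖cauchyPowerSeries f c R' n fun _ => (1:ℂ)‖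
      ≤ (n.factorial : ℝ) * (M * ((R':ℝ)⁻¹) ^ n) := by gcongr; exact h2.trans h4
    _ = (n.factorial : ℝ) * M / (R':ℝ) ^ n := by rw [inv_pow]; ring


/-- Complex extension of `t ↦ t^k Γ(t,x)` where `c = ‖x‖²`. -/
noncomputable def cheat (d k : ℕ) (c : ℝ) (z : ℂ) : ℂ :=
  z ^ k * (4 * (Real.pi : ℂ) * z) ^ (-(d:ℂ)/2) * Complex.exp ((-c : ℂ) / (4 * z))

lemma cheat_differentiableAt (d k : ℕ) (c : ℝ) {z : ℂ} (hz : 0 < z.re) :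
    DifferentiableAt ℂ (cheat d k c) z := by
  have hz0 : z ≠ 0 := by
    intro h; rw [h] at hz; simp at hz
  have hre : (4 * (Real.pi : ℂ) * z).re = 4 * Real.pi * z.re := by
    simp [Complex.mul_re]
  have hslit : (4 * (Real.pi : ℂ) * z) ∈ Complex.slitPlane := by
    rw [Complex.mem_slitPlane_iff]
    left
    rw [hre]
    positivity
  apply DifferentiableAt.mul
  · apply DifferentiableAt.mul
    · exact differentiableAt_pow k
    · exact (((differentiableAt_const _).mul differentiableAt_id).cpow
        (differentiableAt_const _) hslit)
  · apply DifferentiableAt.cexp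
    apply DifferentiableAt.div (differentiableAt_const _)
      ((differentiableAt_const _).mul differentiableAt_id)
    simpa using hz0

lemma cheat_ofReal (d k : ℕ) (x : EuclideanSpace ℝ (Fin d)) {s : ℝ} (hs : 0 < s) :
    cheat d k (‖x‖^2) s = ((s^k * heatKer d s x : ℝ) : ℂ) := by
  rw [cheat, heatKer]
  have h1 : ((s : ℂ))^k = ((s^k : ℝ) : ℂ) := by push_cast; ring
  have h2 : (4 * (Real.pi : ℂ) * s) = ((4 * Real.pi * s : ℝ) : ℂ) := by push_cast; ring
  have h3 : (-(d:ℂ)/2) = ((-(d:ℝ)/2 : ℝ) : ℂ) := by push_cast; ring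
  have h4 : ((-(‖x‖^2 : ℝ) : ℂ)) / (4 * (s:ℂ)) = ((-‖x‖^2 / (4*s) : ℝ) : ℂ) := by
    push_cast; ring
  rw [h1, h2, h3, h4, ← Complex.ofReal_cpow (by positivity), ← Complex.ofReal_exp]
  push_cast
  ring

lemma cheat_diffOn_iter (d k : ℕ) (c : ℝ) (n : ℕ) :
    DifferentiableOn ℂ (iteratedDeriv n (cheat d k c)) {z : ℂ | 0 < z.re} := by
  have hU : IsOpen {z : ℂ | 0 < z.re} := by
    exact isOpen_lt continuous_const Complex.continuous_re
  induction n with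
  | zero =>
    simp only [iteratedDeriv_zero]
    exact fun z hz => (cheat_differentiableAt d k c hz).differentiableWithinAt
  | succ n ih =>
    rw [iteratedDeriv_succ]
    exact ((ih.analyticOnNhd hU).deriv).differentiableOn

lemma deriv_iter_eq_re (d k : ℕ) (x : EuclideanSpace ℝ (Fin d)) (n : ℕ) :
    ∀ s : ℝ, 0 < s →
      deriv^[n] (fun u : ℝ => u^k * heatKer d u x) s
        = (iteratedDeriv n (cheat d k (‖x‖^2)) (s : ℂ)).re := by
  have hU : IsOpen {z : ℂ | 0 < z.re} := isOpen_lt continuous_const Complex.continuous_re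
  induction n with
  | zero =>
    intro s hs
    simp only [Function.iterate_zero, id_eq, iteratedDeriv_zero]
    rw [cheat_ofReal d k x hs, Complex.ofReal_re]
  | succ n ih =>
    intro s hs
    have hmem : (s : ℂ) ∈ {z : ℂ | 0 < z.re} := by simpa using hs
    have hd : HasDerivAt (iteratedDeriv n (cheat d k (‖x‖^2)))
        (deriv (iteratedDeriv n (cheat d k (‖x‖^2))) (s:ℂ)) (s:ℂ) :=
      ((cheat_diffOn_iter d k (‖x‖^2) n).differentiableAt (hU.mem_nhds hmem)).hasDerivAt
    have hre := hd.real_of_complex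
    have hev : deriv^[n] (fun u : ℝ => u^k * heatKer d u x)
        =ᶠ[nhds s] fun u : ℝ => (iteratedDeriv n (cheat d k (‖x‖^2)) (u:ℂ)).re := by
      filter_upwards [eventually_gt_nhds hs] with u hu using ih u hu
    rw [Function.iterate_succ_apply', hev.deriv_eq, hre.deriv, iteratedDeriv_succ]

lemma cheat_norm_bound (d k : ℕ) {c t : ℝ} (hc : 0 ≤ c) (ht : 0 < t) {z : ℂ}
    (hz : z ∈ Metric.sphere (t:ℂ) (t/2)) :
    ‖cheat d k c z‖ ≤ (3*t/2)^k * ((2*Real.pi*t)^(-(d:ℝ)/2) * Real.exp (-c/(18*t))) := by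
  have hdist : ‖z - t‖ = t / 2 := by
    simpa [Complex.dist_eq] using hz
  have hre : t/2 ≤ z.re := by
    have h1 : |(z - t).re| ≤ ‖z - t‖ := Complex.abs_re_le_norm _
    rw [hdist] at h1
    have h2 : (z - (t:ℂ)).re = z.re - t := by simp
    rw [h2] at h1
    have := abs_le.mp h1
    linarith [this.1]
  have hrepos : 0 < z.re := lt_of_lt_of_le (by positivity) hre
  have hz0 : z ≠ 0 := by intro h; rw [h] at hrepos; simp at hrepos
  have habs_ge : t/2 ≤ ‖z‖ := le_trans hre (Complex.re_le_norm z)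
  have habs_le : ‖z‖ ≤ 3*t/2 := by
    calc ‖z‖ = ‖z - t + t‖ := by ring_nf
      _ ≤ ‖z - t‖ + ‖(t:ℂ)‖ := norm_add_le _ _
      _ = t/2 + t := by rw [hdist, Complex.norm_real, Real.norm_eq_abs, abs_of_pos ht]
      _ = 3*t/2 := by ring
  rw [cheat]
  rw [norm_mul, norm_mul]
  have hb1 : ‖z ^ k‖ ≤ (3*t/2)^k := by
    rw [norm_pow]
    exact pow_le_pow_left₀ (norm_nonneg z) habs_le k
  have hb2 : ‖(4 * (Real.pi : ℂ) * z) ^ (-(d:ℂ)/2)‖ ≤ (2*Real.pi*t)^(-(d:ℝ)/2) := by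
    have he : (-(d:ℂ)/2) = (((-(d:ℝ)/2 : ℝ)) : ℂ) := by push_cast; ring
    rw [he]
    rw [Complex.norm_cpow_real]
    have habs4 : ‖4 * (Real.pi : ℂ) * z‖ = 4 * Real.pi * ‖z‖ := by
      rw [norm_mul, norm_mul]
      simp [abs_of_pos Real.pi_pos]
    rw [habs4]
    apply Real.rpow_le_rpow_of_nonpos (by positivity)
    · nlinarith [Real.pi_pos]
    · have : (0:ℝ) ≤ (d:ℝ)/2 := by positivity
      linarith
  have hb3 : ‖Complex.exp ((-(c:ℂ)) / (4 * z))‖ ≤ Real.exp (-c/(18*t)) := by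
    rw [Complex.norm_exp]
    apply Real.exp_le_exp.mpr
    have hrw : (-(c:ℂ)) / (4 * z) = ((-c : ℝ) : ℂ) * (4*z)⁻¹ := by
      push_cast; ring
    rw [hrw, Complex.re_ofReal_mul]
    have hinv : ((4*z)⁻¹).re = (4*z).re / Complex.normSq (4*z) := Complex.inv_re _
    have hre4 : (4*z).re = 4 * z.re := by simp [Complex.mul_re]
    have hnsq : Complex.normSq (4*z) ≤ 36 * t^2 := by
      rw [← Complex.sq_norm]
      have : ‖4*z‖ = 4 * ‖z‖ := by
        rw [norm_mul]; simp
      rw [this]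
      nlinarith
    have hnsqpos : 0 < Complex.normSq (4*z) := by
      rw [Complex.normSq_pos]
      simpa using hz0
    have hkey : 1/(18*t) ≤ ((4*z)⁻¹).re := by
      rw [hinv]
      have h2t : 2*t ≤ (4*z).re := by rw [hre4]; linarith
      calc (1:ℝ)/(18*t) = 2*t/(36*t^2) := by
            field_simp; ring
        _ ≤ (4*z).re / Complex.normSq (4*z) :=
            div_le_div₀ (by linarith) h2t hnsqpos hnsq
    calc -c * ((4*z)⁻¹).re ≤ -c * (1/(18*t)) := by
          apply mul_le_mul_of_nonpos_left hkey (by linarith)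
      _ = -c/(18*t) := by ring
  calc ‖z ^ k‖ * ‖(4 * (Real.pi : ℂ) * z) ^ (-(d:ℂ)/2)‖ * ‖Complex.exp ((-(c:ℂ)) / (4 * z))‖
      ≤ (3*t/2)^k * ((2*Real.pi*t)^(-(d:ℝ)/2)) * Real.exp (-c/(18*t)) := by
        apply mul_le_mul (mul_le_mul hb1 hb2 (norm_nonneg _) (by positivity)) hb3
          (norm_nonneg _) (by positivity)
    _ = (3*t/2)^k * ((2*Real.pi*t)^(-(d:ℝ)/2) * Real.exp (-c/(18*t))) := by ring

lemma pointwise_bound (d k : ℕ) (x : EuclideanSpace ℝ (Fin d)) {t : ℝ} (ht : 0 < t) :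
    |deriv^[k] (fun s : ℝ => s^k * heatKer d s x) t|
      ≤ (k.factorial : ℝ) * 3^k
        * ((2*Real.pi*t)^(-(d:ℝ)/2) * Real.exp (-‖x‖^2/(18*t))) := by
  set c : ℝ := ‖x‖^2 with hcdef
  have hc : 0 ≤ c := by positivity
  set M : ℝ := (3*t/2)^k * ((2*Real.pi*t)^(-(d:ℝ)/2) * Real.exp (-c/(18*t))) with hM
  have hMnn : 0 ≤ M := by positivity
  have hf : DifferentiableOn ℂ (cheat d k c) (Metric.closedBall (t:ℂ) (t/2)) := by
    intro z hz
    have hdist : ‖z - t‖ ≤ t / 2 := by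
      simpa [Complex.dist_eq] using hz
    have hre : 0 < z.re := by
      have h1 : |(z - t).re| ≤ ‖z - t‖ := Complex.abs_re_le_norm _
      have h2 : (z - (t:ℂ)).re = z.re - t := by simp
      rw [h2] at h1
      have := abs_le.mp (h1.trans hdist)
      linarith [this.1]
    exact (cheat_differentiableAt d k c hre).differentiableWithinAt
  have hb := fun z hz => cheat_norm_bound d k hc ht (z := z) hz
  have hcb := cauchy_bound (f := cheat d k c) (c := (t:ℂ)) (R := t/2) (M := M)
    (by positivity) hMnn hf hb k
  rw [deriv_iter_eq_re d k x k t ht]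
  have h1 : |(iteratedDeriv k (cheat d k c) (t:ℂ)).re|
      ≤ ‖iteratedDeriv k (cheat d k c) (t:ℂ)‖ := Complex.abs_re_le_norm _
  refine (h1.trans hcb).trans (le_of_eq ?_)
  rw [hM]
  have h2 : (3*t/2)^k = 3^k * (t/2)^k := by
    rw [← mul_pow]; ring_nf
  rw [h2]
  have h3 : (0:ℝ) < (t/2)^k := by positivity
  field_simp

lemma rpow_prod_eq (d : ℕ) {t : ℝ} (ht : 0 < t) :
    (2*Real.pi*t)^(-(d:ℝ)/2) * (18*Real.pi*t)^((d:ℝ)/2) = (3:ℝ)^d := by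
  have h2 : (0:ℝ) < 2*Real.pi*t := by positivity
  have h18 : (18*Real.pi*t : ℝ) = 9 * (2*Real.pi*t) := by ring
  rw [h18, Real.mul_rpow (by norm_num) h2.le, ← mul_assoc,
    mul_comm ((2*Real.pi*t)^(-(d:ℝ)/2)), mul_assoc, ← Real.rpow_add h2]
  have hz : (-(d:ℝ)/2 + (d:ℝ)/2) = 0 := by ring
  rw [hz, Real.rpow_zero, mul_one]
  have h9 : (9:ℝ) = (3:ℝ)^(2:ℝ) := by
    rw [show ((2:ℝ) = ((2:ℕ):ℝ)) by norm_num, Real.rpow_natCast]; norm_num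
  rw [h9, ← Real.rpow_mul (by norm_num : (0:ℝ) ≤ 3)]
  rw [show ((2:ℝ) * ((d:ℝ)/2) = (d:ℝ)) by ring, Real.rpow_natCast]

lemma final_arith (d k : ℕ) (hk : 1 ≤ k) :
    (k.factorial : ℝ) * 3^k * 3^d ≤ (9*3^d : ℝ)^(k+1) * (k:ℝ)^((k:ℝ)-2/3) := by
  have hk1 : (1:ℝ) ≤ (k:ℝ) := by exact_mod_cast hk
  have hkpos : (0:ℝ) < (k:ℝ) := by linarith
  have hrnn : (0:ℝ) ≤ (k:ℝ)^((k:ℝ)-2/3) := Real.rpow_nonneg hkpos.le _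
  have hfact : (k.factorial : ℝ) ≤ (k:ℝ)^(k:ℕ) := by
    exact_mod_cast Nat.factorial_le_pow k
  have hsplit : ((k:ℝ))^(k:ℕ) = (k:ℝ)^((2:ℝ)/3) * (k:ℝ)^((k:ℝ)-2/3) := by
    rw [← Real.rpow_natCast (k:ℝ) k, ← Real.rpow_add hkpos]
    ring_nf
  have h23 : (k:ℝ)^((2:ℝ)/3) ≤ (k:ℝ) := by
    calc (k:ℝ)^((2:ℝ)/3) ≤ (k:ℝ)^(1:ℝ) :=
          Real.rpow_le_rpow_of_exponent_le hk1 (by norm_num)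
      _ = (k:ℝ) := Real.rpow_one _
  have hk3 : (k:ℝ) ≤ (3:ℝ)^k := by
    exact_mod_cast (Nat.lt_pow_self (n := k) (a := 3) (by norm_num)).le
  have h9 : (3:ℝ)^k * (3:ℝ)^k = 9^k := by rw [← mul_pow]; norm_num
  calc (k.factorial : ℝ) * 3^k * 3^d
      ≤ (k:ℝ)^(k:ℕ) * 3^k * 3^d := by gcongr
    _ = ((k:ℝ)^((2:ℝ)/3) * ((k:ℝ)^((k:ℝ)-2/3))) * 3^k * 3^d := by rw [hsplit]
    _ ≤ ((k:ℝ) * ((k:ℝ)^((k:ℝ)-2/3))) * 3^k * 3^d := by gcongr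
    _ ≤ ((3:ℝ)^k * ((k:ℝ)^((k:ℝ)-2/3))) * 3^k * 3^d := by gcongr
    _ = (9^k * 3^d) * ((k:ℝ)^((k:ℝ)-2/3)) := by rw [← h9]; ring
    _ ≤ (9^(k+1) * (3^d)^(k+1)) * ((k:ℝ)^((k:ℝ)-2/3)) := by
        have h91 : (9:ℝ)^k ≤ 9^(k+1) :=
          pow_le_pow_right₀ (by norm_num : (1:ℝ) ≤ 9) (Nat.le_succ k)
        have h3d : (3:ℝ)^d ≤ ((3:ℝ)^d)^(k+1) :=
          le_self_pow₀ (one_le_pow₀ (by norm_num : (1:ℝ) ≤ 3)) (Nat.succ_ne_zero k)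
        have h3dnn : (0:ℝ) ≤ (3:ℝ)^d := by positivity
        have h9nn : (0:ℝ) ≤ (9:ℝ)^k := by positivity
        apply mul_le_mul_of_nonneg_right _ hrnn
        exact mul_le_mul h91 h3d h3dnn (by positivity)
    _ = (9*3^d : ℝ)^(k+1) * ((k:ℝ)^((k:ℝ)-2/3)) := by rw [mul_pow]

/-- There is `C₁ ≥ 1` depending only on `d` such that for every integer `k ≥ 1` and
`t > 0`, `‖∂ₜᵏ(tᵏ Γ(t,·))‖_{L¹(ℝ^d)} ≤ C₁^{k+1} k^{k-2/3}`. -/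
theorem heat_kernel_weighted_time_deriv_L1 (d : ℕ) :
    ∃ C₁ ≥ (1:ℝ), ∀ k : ℕ, 1 ≤ k → ∀ t : ℝ, 0 < t →
      (∫ x : EuclideanSpace ℝ (Fin d), |deriv^[k] (fun s => s^k * heatKer d s x) t|)
        ≤ C₁^(k+1) * (k:ℝ) ^ ((k:ℝ) - 2/3) := by
  refine ⟨9 * 3^d, ?_, ?_⟩
  · have h3 : (1:ℝ) ≤ 3^d := one_le_pow₀ (by norm_num)
    nlinarith
  intro k hk t ht
  have hb : (0:ℝ) < 1/(18*t) := by positivity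
  set A : ℝ := (k.factorial : ℝ) * 3^k * (2*Real.pi*t)^(-(d:ℝ)/2) with hA
  have hAnn : 0 ≤ A := by positivity
  have hint0 : Integrable (fun v : EuclideanSpace ℝ (Fin d) =>
      Real.exp (-(1/(18*t)) * ‖v‖^2)) := by
    have h := GaussianFourier.integrable_cexp_neg_mul_sq_norm_add
      (V := EuclideanSpace ℝ (Fin d)) (b := ((1/(18*t):ℝ):ℂ)) (by simpa using hb) 0 0
    refine h.norm.congr (Filter.Eventually.of_forall fun v => ?_)
    simp [Complex.norm_exp]
    norm_cast
    exact Or.inl rfl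
  have hval : (∫ v : EuclideanSpace ℝ (Fin d), Real.exp (-(1/(18*t)) * ‖v‖^2))
      = (18*Real.pi*t) ^ ((d:ℝ)/2) := by
    have h := GaussianFourier.integral_rexp_neg_mul_sq_norm
      (V := EuclideanSpace ℝ (Fin d)) hb
    rw [h, finrank_euclideanSpace_fin]
    have : Real.pi / (1/(18*t)) = 18*Real.pi*t := by field_simp
    rw [this]
  calc (∫ x : EuclideanSpace ℝ (Fin d), |deriv^[k] (fun s => s^k * heatKer d s x) t|)
      ≤ ∫ x : EuclideanSpace ℝ (Fin d), A * Real.exp (-(1/(18*t)) * ‖x‖^2) := by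
        apply integral_mono_of_nonneg
          (Filter.Eventually.of_forall fun x => abs_nonneg _)
          (hint0.const_mul A)
        refine Filter.Eventually.of_forall fun x => ?_
        have hpb := pointwise_bound d k x ht
        have harg : -‖x‖^2/(18*t) = -(1/(18*t)) * ‖x‖^2 := by ring
        rw [harg] at hpb
        exact hpb.trans (le_of_eq (by rw [hA]; ring))
    _ = A * ((18*Real.pi*t) ^ ((d:ℝ)/2)) := by
        rw [integral_const_mul, hval]
    _ = (k.factorial : ℝ) * 3^k * 3^d := by
        rw [hA, mul_assoc, mul_assoc, rpow_prod_eq d ht]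
        ring
    _ ≤ (9*3^d : ℝ)^(k+1) * (k:ℝ)^((k:ℝ)-2/3) := final_arith d k hk
end

section
/- Let Γ(t,x) = (4πt)^{−d/2} e^{−|x|²/(4t)} be the heat kernel on ℝ^d. There exists a constant C₀ ≥ 1 depending only on d such that ‖∇Γ(t,·)‖_{L¹(ℝ^d)} ≤ C₀ t^{−1/2} for all t > 0, and for every integer k ≥ 1 and every t > 0, ‖∂_t^k ∇Γ(t,·)‖_{L¹(ℝ^d)} ≤ C₀^{k+1} k^{k−2/3} t^{−k−1/2}. -/
open Real MeasureTheory

lemma gradient_heatKer_aux (d : ℕ) {t : ℝ} (ht : 0 < t) (x : EuclideanSpace ℝ (Fin d)) :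
    gradient (heatKer d t) x = (heatKer d t x * (-(1/(2*t)))) • x := by
  have hk : heatKer d t = fun y : EuclideanSpace ℝ (Fin d) =>
      (4 * Real.pi * t) ^ (-(d:ℝ)/2) * Real.exp ((-(4*t)⁻¹) * ‖y‖^2) := by
    funext y
    rw [heatKer, show -‖y‖^2/(4*t) = -(4*t)⁻¹ * ‖y‖^2 by ring]
  rw [hk]
  set C := (4 * Real.pi * t) ^ (-(d:ℝ)/2) with hC
  set c := (-(4*t)⁻¹ : ℝ) with hc
  have h1 : HasFDerivAt (fun y : EuclideanSpace ℝ (Fin d) => ‖y‖^2) (2 • (innerSL ℝ x)) x :=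
    (hasStrictFDerivAt_norm_sq x).hasFDerivAt
  have h2 := h1.const_mul c
  have h3 := (Real.hasDerivAt_exp (c * ‖x‖^2)).comp_hasFDerivAt x h2
  have h4 := h3.const_mul C
  have h5 : HasGradientAt (fun y : EuclideanSpace ℝ (Fin d) => C * Real.exp (c * ‖y‖^2))
      ((C * Real.exp (c * ‖x‖^2) * (-(1/(2*t)))) • x) x := by
    rw [hasGradientAt_iff_hasFDerivAt]
    convert h4 using 1
    · rfl
    show (_ : EuclideanSpace ℝ (Fin d) →L[ℝ] ℝ) = _
    ext y
    simp only [InnerProductSpace.toDual_apply_apply, real_inner_smul_left,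
      ContinuousLinearMap.smul_apply, innerSL_apply_apply, smul_eq_mul, Function.comp]
    rw [hc]
    field_simp
    ring
    rfl
  exact h5.gradient

noncomputable def hco (m : ℝ) : ℕ → ℕ → ℝ
  | 0, 0 => 1
  | 0, _+1 => 0
  | k+1, 0 => -(m + k) * hco m k 0
  | k+1, j+1 => -(m + k + (j+1)) * hco m k (j+1) + hco m k j

lemma hco_eq_zero (m : ℝ) : ∀ k j, k < j → hco m k j = 0 := by
  intro k
  induction k with
  | zero => intro j hj; match j, hj with
            | j+1, _ => rfl
  | succ k ih =>
    intro j hj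
    match j, hj with
    | j+1, hj =>
      have h1 : k < j + 1 := by omega
      have h2 : k < j := by omega
      show -(m + k + (j+1)) * hco m k (j+1) + hco m k j = 0
      rw [ih _ h1, ih _ h2]; ring

noncomputable def mm (d : ℕ) : ℝ := (d:ℝ)/2 + 1
noncomputable def KK (d : ℕ) : ℝ := -((4*Real.pi) ^ (-(d:ℝ)/2) / 2)

noncomputable def ek (d k : ℕ) (t a : ℝ) : ℝ :=
  ∑ j ∈ Finset.range (k+1),
    KK d * hco (mm d) k j * a^j * (t ^ (-(mm d + k + j)) * Real.exp (-a/t))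

lemma hasDerivAt_rpow_exp (p a : ℝ) {t : ℝ} (ht : 0 < t) :
    HasDerivAt (fun s : ℝ => s ^ p * Real.exp (-a/s))
      (p * t^(p-1) * Real.exp (-a/t) + t^p * (Real.exp (-a/t) * (a/t^2))) t := by
  have h1 : HasDerivAt (fun s : ℝ => s ^ p) (p * t^(p-1)) t :=
    Real.hasDerivAt_rpow_const (Or.inl ht.ne')
  have h2 : HasDerivAt (fun s : ℝ => -a/s) (a/t^2) t := by
    have h := (hasDerivAt_inv ht.ne').const_mul (-a)
    have heq : -a * -(t^2)⁻¹ = a/t^2 := by field_simp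
    rw [heq] at h
    have hf : (fun s : ℝ => -a * s⁻¹) = fun s : ℝ => -a/s := by
      funext s; ring
    rwa [hf] at h
  exact h1.mul h2.exp

lemma hasDerivAt_ek (d k : ℕ) (a : ℝ) {t : ℝ} (ht : 0 < t) :
    HasDerivAt (fun s => ek d k s a) (ek d (k+1) t a) t := by
  have hD : HasDerivAt (fun s => ek d k s a)
      (∑ j ∈ Finset.range (k+1), KK d * hco (mm d) k j * a^j *
        (-(mm d + k + j) * t^(-(mm d + k + j)-1) * Real.exp (-a/t) +
          t^(-(mm d + k + j)) * (Real.exp (-a/t) * (a/t^2)))) t := by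
    apply HasDerivAt.fun_sum
    intro j _
    exact (hasDerivAt_rpow_exp (-(mm d + k + j)) a ht).const_mul _
  convert hD using 1
  -- sum algebra
  have hzero : hco (mm d) k (k+1) = 0 := hco_eq_zero _ _ _ (Nat.lt_succ_self k)
  rw [ek]
  have hsplit : ∀ j ∈ Finset.range (k+2),
      KK d * hco (mm d) (k+1) j * a^j * (t ^ (-(mm d + (k+1:ℕ) + j)) * Real.exp (-a/t))
      = (KK d * (-(mm d + k + j) * hco (mm d) k j) * a^j *
          (t ^ (-(mm d + (k+1:ℕ) + j)) * Real.exp (-a/t)))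
        + (KK d * (match j with | 0 => (0:ℝ) | j+1 => hco (mm d) k j) * a^j *
          (t ^ (-(mm d + (k+1:ℕ) + j)) * Real.exp (-a/t))) := by
    intro j _
    match j with
    | 0 => show KK d * hco (mm d) (k+1) 0 * _ * _ = _
           rw [show hco (mm d) (k+1) 0 = -(mm d + k) * hco (mm d) k 0 from rfl]
           push_cast; ring
    | j+1 => rw [show hco (mm d) (k+1) (j+1)
                  = -(mm d + k + (j+1)) * hco (mm d) k (j+1) + hco (mm d) k j from rfl]
             push_cast; ring
  rw [Finset.sum_congr rfl hsplit, Finset.sum_add_distrib]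
  have e1 : ∑ j ∈ Finset.range (k+2), (KK d * (-(mm d + k + j) * hco (mm d) k j) * a^j *
        (t ^ (-(mm d + (k+1:ℕ) + j)) * Real.exp (-a/t)))
      = ∑ j ∈ Finset.range (k+1), (KK d * (-(mm d + k + j) * hco (mm d) k j) * a^j *
        (t ^ (-(mm d + (k+1:ℕ) + j)) * Real.exp (-a/t))) := by
    rw [Finset.sum_range_succ, hzero]; ring
  have e2 : ∑ j ∈ Finset.range (k+2), (KK d *
        (match j with | 0 => (0:ℝ) | j+1 => hco (mm d) k j) * a^j *
        (t ^ (-(mm d + (k+1:ℕ) + j)) * Real.exp (-a/t)))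
      = ∑ j ∈ Finset.range (k+1), (KK d * hco (mm d) k j * a^(j+1) *
        (t ^ (-(mm d + (k+1:ℕ) + (j+1:ℕ))) * Real.exp (-a/t))) := by
    rw [Finset.sum_range_succ']
    simp
  rw [e1, e2, ← Finset.sum_add_distrib]
  apply Finset.sum_congr rfl
  intro j hj
  have hexp1 : (-(mm d + ((k+1:ℕ):ℝ) + (j:ℝ)) : ℝ) = -(mm d + (k:ℝ) + (j:ℝ)) - 1 := by
    push_cast; ring
  have hexp2 : (t:ℝ) ^ (-(mm d + ((k+1:ℕ):ℝ) + ((j+1:ℕ):ℝ)))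
      = t ^ (-(mm d + (k:ℝ) + (j:ℝ))) * t ^ (-2:ℝ) := by
    rw [← Real.rpow_add ht]; congr 1; push_cast; ring
  have ht2 : (t:ℝ) ^ (-2:ℝ) = (t^2)⁻¹ := by
    rw [show (-2:ℝ) = -((2:ℕ):ℝ) by norm_num, Real.rpow_neg ht.le, Real.rpow_natCast]
  rw [hexp1, hexp2, ht2, pow_succ]
  field_simp

lemma ek_zero (d : ℕ) {t : ℝ} (ht : 0 < t) (x : EuclideanSpace ℝ (Fin d)) :
    ek d 0 t (‖x‖^2/4) = heatKer d t x * (-(1/(2*t))) := by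
  rw [ek, Finset.sum_range_one, heatKer]
  show KK d * hco ((d:ℝ)/2+1) 0 0 * _ * _ = _
  rw [show hco ((d:ℝ)/2+1) 0 0 = 1 from rfl, KK, mm]
  have h1 : (4 * Real.pi * t) ^ (-(d:ℝ)/2) = (4 * Real.pi) ^ (-(d:ℝ)/2) * t ^ (-(d:ℝ)/2) :=
    Real.mul_rpow (by positivity) ht.le
  have h2 : t ^ (-((d:ℝ)/2 + 1 + (0:ℕ) + (0:ℕ))) = t ^ (-(d:ℝ)/2) * t⁻¹ := by
    rw [show (-((d:ℝ)/2 + 1 + (0:ℕ) + (0:ℕ))) = -(d:ℝ)/2 + (-1) by push_cast; ring,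
      Real.rpow_add ht, Real.rpow_neg_one]
  have h3 : Real.exp (-(‖x‖^2/4)/t) = Real.exp (-‖x‖^2/(4*t)) := by
    congr 1; ring
  rw [h1, h2, h3]
  field_simp

lemma deriv_iter_grad (d : ℕ) (x : EuclideanSpace ℝ (Fin d)) :
    ∀ (k : ℕ) (t : ℝ), 0 < t →
      deriv^[k] (fun s => gradient (heatKer d s) x) t = ek d k t (‖x‖^2/4) • x := by
  intro k
  induction k with
  | zero =>
    intro t ht
    simp only [Function.iterate_zero, id_eq]
    rw [gradient_heatKer_aux d ht x, ek_zero d ht x]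
  | succ k ih =>
    intro t ht
    rw [Function.iterate_succ_apply']
    have hev : deriv^[k] (fun s => gradient (heatKer d s) x)
        =ᶠ[nhds t] fun s => ek d k s (‖x‖^2/4) • x := by
      filter_upwards [Ioi_mem_nhds ht] with s hs using ih s hs
    rw [hev.deriv_eq]
    exact ((hasDerivAt_ek d k (‖x‖^2/4) ht).smul_const x).deriv

lemma hco_weight_bound (m θ : ℝ) (hm : 0 ≤ m) (hθ : 0 ≤ θ) :
    ∀ k, ∑ j ∈ Finset.range (k+1), |hco m k j| * θ^j ≤ (m + 2*k + θ)^k := by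
  intro k
  induction k with
  | zero => simp [show hco m 0 0 = (1:ℝ) from rfl]
  | succ k ih =>
    set w : ℕ → ℝ := fun j => Nat.casesOn j 0 fun i => |hco m k i| with hw
    have hw0 : w 0 = 0 := rfl
    have hws : ∀ j, w (j+1) = |hco m k j| := fun j => rfl
    have hstep : ∀ j ∈ Finset.range (k+2), |hco m (k+1) j| * θ^j
        ≤ ((m + 2*k) * |hco m k j|) * θ^j + w j * θ^j := by
      intro j _
      have hθj : (0:ℝ) ≤ θ^j := by positivity
      have habs : |hco m (k+1) j| ≤ (m + 2*k) * |hco m k j| + w j := by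
        match j with
        | 0 =>
          rw [hw0, add_zero]
          show |(-(m + (k:ℝ)) * hco m k 0)| ≤ _
          rw [abs_mul, abs_neg, abs_of_nonneg (by positivity : (0:ℝ) ≤ m + (k:ℝ))]
          have h2 : m + (k:ℝ) ≤ m + 2*k := by
            have := Nat.cast_nonneg (α := ℝ) k; linarith
          exact mul_le_mul_of_nonneg_right h2 (abs_nonneg _)
        | j+1 =>
          rw [hws]
          show |(-(m + (k:ℝ) + ((j:ℝ)+1)) * hco m k (j+1) + hco m k j)| ≤ _
          have h1 : (0:ℝ) ≤ m + (k:ℝ) + ((j:ℝ)+1) := by positivity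
          have hcc : (m + (k:ℝ) + ((j:ℝ)+1)) * |hco m k (j+1)|
              ≤ (m + 2*(k:ℝ)) * |hco m k (j+1)| := by
            rcases le_or_gt (j+1) k with h | h
            · apply mul_le_mul_of_nonneg_right _ (abs_nonneg _)
              have : ((j:ℝ)+1) ≤ (k:ℝ) := by exact_mod_cast h
              linarith
            · rw [hco_eq_zero m k (j+1) h]; simp
          calc |(-(m + (k:ℝ) + ((j:ℝ)+1)) * hco m k (j+1) + hco m k j)|
              ≤ |(-(m + (k:ℝ) + ((j:ℝ)+1)) * hco m k (j+1))| + |hco m k j| := abs_add_le _ _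
            _ = (m + (k:ℝ) + ((j:ℝ)+1)) * |hco m k (j+1)| + |hco m k j| := by
                rw [abs_mul, abs_neg, abs_of_nonneg h1]
            _ ≤ (m + 2*(k:ℝ)) * |hco m k (j+1)| + |hco m k j| := by linarith
      have := mul_le_mul_of_nonneg_right habs hθj
      rw [add_mul] at this
      exact this
    calc ∑ j ∈ Finset.range (k+2), |hco m (k+1) j| * θ^j
        ≤ ∑ j ∈ Finset.range (k+2), (((m + 2*k) * |hco m k j|) * θ^j + w j * θ^j) :=
          Finset.sum_le_sum hstep
      _ = (m + 2*k) * (∑ j ∈ Finset.range (k+2), |hco m k j| * θ^j)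
            + ∑ j ∈ Finset.range (k+2), w j * θ^j := by
          rw [Finset.sum_add_distrib, Finset.mul_sum]
          congr 1
          exact Finset.sum_congr rfl fun j _ => by ring
      _ ≤ (m + 2*k) * (∑ j ∈ Finset.range (k+1), |hco m k j| * θ^j)
            + θ * ∑ j ∈ Finset.range (k+1), |hco m k j| * θ^j := by
          have hA : ∑ j ∈ Finset.range (k+2), |hco m k j| * θ^j
              = ∑ j ∈ Finset.range (k+1), |hco m k j| * θ^j := by
            rw [Finset.sum_range_succ, hco_eq_zero m k (k+1) (Nat.lt_succ_self k)]
            simp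
          have hB : ∑ j ∈ Finset.range (k+2), w j * θ^j
              = θ * ∑ j ∈ Finset.range (k+1), |hco m k j| * θ^j := by
            rw [Finset.sum_range_succ', hw0, Finset.mul_sum]
            simp only [hws, zero_mul, add_zero]
            exact Finset.sum_congr rfl fun j _ => by rw [pow_succ]; ring
          rw [hA, hB]
      _ = (m + 2*k + θ) * ∑ j ∈ Finset.range (k+1), |hco m k j| * θ^j := by ring
      _ ≤ (m + 2*k + θ) * (m + 2*k + θ)^k :=
          mul_le_mul_of_nonneg_left ih (by positivity)
      _ = (m + 2*k + θ)^(k+1) := by rw [pow_succ]; ring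
      _ ≤ (m + 2*((k+1:ℕ):ℝ) + θ)^(k+1) := by
          apply pow_le_pow_left₀ (by positivity)
          push_cast; linarith

lemma fact_le_pow {j k : ℕ} (h : j ≤ k) : ((Nat.factorial j : ℕ) : ℝ) ≤ (k:ℝ)^j := by
  induction j with
  | zero => simp
  | succ j ih =>
    have hj : j ≤ k := by omega
    have h1 : ((j+1:ℕ) : ℝ) ≤ (k:ℝ) := by exact_mod_cast h
    calc ((Nat.factorial (j+1) : ℕ) : ℝ) = ((j+1:ℕ):ℝ) * ((Nat.factorial j : ℕ) : ℝ) := by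
          push_cast [Nat.factorial_succ]; ring
      _ ≤ (k:ℝ) * (k:ℝ)^j := by
          apply mul_le_mul h1 (ih hj) (by positivity) (by positivity)
      _ = (k:ℝ)^(j+1) := by rw [pow_succ]; ring

lemma pow_exp_bound {a t : ℝ} (ha : 0 ≤ a) (ht : 0 < t) (j : ℕ) :
    a^j * Real.exp (-a/t) ≤ ((Nat.factorial j : ℕ) : ℝ) * (2*t)^j * Real.exp (-a/(2*t)) := by
  have h2t : (0:ℝ) < 2*t := by linarith
  have hu : (0:ℝ) ≤ a/(2*t) := by positivity
  have hkey : (a/(2*t))^j / ((Nat.factorial j : ℕ) : ℝ) ≤ Real.exp (a/(2*t)) := by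
    calc (a/(2*t))^j / ((Nat.factorial j : ℕ) : ℝ)
        ≤ ∑ i ∈ Finset.range (j+1), (a/(2*t))^i / ((Nat.factorial i : ℕ) : ℝ) := by
          apply Finset.single_le_sum (f := fun i => (a/(2*t))^i / ((Nat.factorial i : ℕ) : ℝ))
          · intro i _; positivity
          · exact Finset.self_mem_range_succ j
      _ ≤ Real.exp (a/(2*t)) := Real.sum_le_exp_of_nonneg hu _
  have hfj : (0:ℝ) < ((Nat.factorial j : ℕ) : ℝ) := by exact_mod_cast Nat.factorial_pos j
  have haj : a^j ≤ ((Nat.factorial j : ℕ) : ℝ) * (2*t)^j * Real.exp (a/(2*t)) := by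
    have h1 : (a/(2*t))^j ≤ ((Nat.factorial j : ℕ) : ℝ) * Real.exp (a/(2*t)) := by
      rw [div_le_iff₀ hfj] at hkey
      linarith [hkey]
    have h2 : a^j = (a/(2*t))^j * (2*t)^j := by
      rw [div_pow, div_mul_cancel₀]
      positivity
    rw [h2]
    calc (a/(2*t))^j * (2*t)^j ≤ (((Nat.factorial j : ℕ) : ℝ) * Real.exp (a/(2*t))) * (2*t)^j :=
          mul_le_mul_of_nonneg_right h1 (by positivity)
      _ = ((Nat.factorial j : ℕ) : ℝ) * (2*t)^j * Real.exp (a/(2*t)) := by ring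
  have hsplit : Real.exp (-a/t) = Real.exp (-a/(2*t)) * Real.exp (-a/(2*t)) := by
    rw [← Real.exp_add]; congr 1; field_simp; ring
  calc a^j * Real.exp (-a/t)
      ≤ (((Nat.factorial j : ℕ) : ℝ) * (2*t)^j * Real.exp (a/(2*t))) * Real.exp (-a/t) :=
        mul_le_mul_of_nonneg_right haj (Real.exp_pos _).le
    _ = ((Nat.factorial j : ℕ) : ℝ) * (2*t)^j * (Real.exp (a/(2*t)) * Real.exp (-a/(2*t))) * Real.exp (-a/(2*t)) := by
        rw [hsplit]; ring
    _ = ((Nat.factorial j : ℕ) : ℝ) * (2*t)^j * Real.exp (-a/(2*t)) := by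
        rw [← Real.exp_add, show a/(2*t) + -a/(2*t) = 0 by ring, Real.exp_zero, mul_one]

lemma ek_abs_le (d k : ℕ) {t a : ℝ} (ht : 0 < t) (ha : 0 ≤ a) :
    |ek d k t a| ≤ (4*Real.pi) ^ (-(d:ℝ)/2) / 2 * (mm d + 4*k)^k
      * (t ^ (-(mm d + k)) * Real.exp (-a/(2*t))) := by
  have hm : (0:ℝ) ≤ mm d := by rw [mm]; positivity
  have hKabs : |KK d| = (4*Real.pi) ^ (-(d:ℝ)/2) / 2 := by
    rw [KK, abs_neg, abs_of_nonneg (by positivity)]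
  have hterm : ∀ j ∈ Finset.range (k+1),
      |KK d * hco (mm d) k j * a^j * (t ^ (-(mm d + k + j)) * Real.exp (-a/t))|
      ≤ (4*Real.pi) ^ (-(d:ℝ)/2) / 2 * (|hco (mm d) k j| * (2*(k:ℝ))^j)
        * (t ^ (-(mm d + k)) * Real.exp (-a/(2*t))) := by
    intro j hj
    have hjk : j ≤ k := by
      have := Finset.mem_range.mp hj; omega
    have hsplitpow : t ^ (-(mm d + (k:ℝ) + (j:ℝ))) = t ^ (-(mm d + (k:ℝ))) * ((t^j)⁻¹) := by
      have hnj : t ^ (-(j:ℝ)) = (t^j)⁻¹ := by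
        rw [Real.rpow_neg ht.le, Real.rpow_natCast]
      rw [show (-(mm d + (k:ℝ) + (j:ℝ))) = -(mm d + (k:ℝ)) + (-(j:ℝ)) by ring,
        Real.rpow_add ht, hnj]
    have habsall : |KK d * hco (mm d) k j * a^j * (t ^ (-(mm d + k + j)) * Real.exp (-a/t))|
        = |KK d| * |hco (mm d) k j| * a^j * (t ^ (-(mm d + k + j)) * Real.exp (-a/t)) := by
      rw [abs_mul, abs_mul, abs_mul, abs_pow, abs_of_nonneg ha,
        abs_of_nonneg (by positivity : (0:ℝ) ≤ t ^ (-(mm d + (k:ℝ) + (j:ℝ))) * Real.exp (-a/t))]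
    rw [habsall, hKabs, hsplitpow]
    have hfact : ((Nat.factorial j : ℕ) : ℝ) ≤ (k:ℝ)^j := fact_le_pow hjk
    have hb := pow_exp_bound ha ht j
    -- a^j * exp(-a/t) ≤ j! (2t)^j exp(-a/(2t)) ≤ k^j 2^j t^j exp(-a/(2t))
    have hb2 : a^j * Real.exp (-a/t) ≤ (2*(k:ℝ))^j * t^j * Real.exp (-a/(2*t)) := by
      calc a^j * Real.exp (-a/t) ≤ ((Nat.factorial j : ℕ) : ℝ) * (2*t)^j * Real.exp (-a/(2*t)) := hb
        _ ≤ (k:ℝ)^j * (2*t)^j * Real.exp (-a/(2*t)) := by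
            apply mul_le_mul_of_nonneg_right _ (Real.exp_pos _).le
            exact mul_le_mul_of_nonneg_right hfact (by positivity)
        _ = (2*(k:ℝ))^j * t^j * Real.exp (-a/(2*t)) := by
            rw [mul_pow, mul_pow]; ring
    have htj : (0:ℝ) < t^j := by positivity
    have hT : (0:ℝ) < t ^ (-(mm d + (k:ℝ))) := Real.rpow_pos_of_pos ht _
    -- goal: |K| * |c| * a^j * (t^-(m+k) * (t^j)⁻¹ * exp(-a/t)) ≤ |K| * (|c| (2k)^j) * (t^-(m+k) exp(-a/(2t)))
    have step : a^j * ((t^j)⁻¹ * Real.exp (-a/t)) ≤ (2*(k:ℝ))^j * Real.exp (-a/(2*t)) := by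
      rw [← mul_assoc]
      rw [show a^j * (t^j)⁻¹ * Real.exp (-a/t) = (a^j * Real.exp (-a/t)) * (t^j)⁻¹ by ring]
      calc (a^j * Real.exp (-a/t)) * (t^j)⁻¹
          ≤ ((2*(k:ℝ))^j * t^j * Real.exp (-a/(2*t))) * (t^j)⁻¹ :=
            mul_le_mul_of_nonneg_right hb2 (by positivity)
        _ = (2*(k:ℝ))^j * Real.exp (-a/(2*t)) * (t^j * (t^j)⁻¹) := by ring
        _ = (2*(k:ℝ))^j * Real.exp (-a/(2*t)) := by
            rw [mul_inv_cancel₀ htj.ne', mul_one]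
    calc (4*Real.pi) ^ (-(d:ℝ)/2) / 2 * |hco (mm d) k j| * a^j
          * (t ^ (-(mm d + (k:ℝ))) * (t^j)⁻¹ * Real.exp (-a/t))
        = (4*Real.pi) ^ (-(d:ℝ)/2) / 2 * |hco (mm d) k j| * t ^ (-(mm d + (k:ℝ)))
          * (a^j * ((t^j)⁻¹ * Real.exp (-a/t))) := by ring
      _ ≤ (4*Real.pi) ^ (-(d:ℝ)/2) / 2 * |hco (mm d) k j| * t ^ (-(mm d + (k:ℝ)))
          * ((2*(k:ℝ))^j * Real.exp (-a/(2*t))) := by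
          apply mul_le_mul_of_nonneg_left step (by positivity)
      _ = (4*Real.pi) ^ (-(d:ℝ)/2) / 2 * (|hco (mm d) k j| * (2*(k:ℝ))^j)
          * (t ^ (-(mm d + (k:ℝ))) * Real.exp (-a/(2*t))) := by ring
  calc |ek d k t a|
      ≤ ∑ j ∈ Finset.range (k+1),
        |KK d * hco (mm d) k j * a^j * (t ^ (-(mm d + k + j)) * Real.exp (-a/t))| := by
        rw [ek]; exact Finset.abs_sum_le_sum_abs _ _
    _ ≤ ∑ j ∈ Finset.range (k+1), (4*Real.pi) ^ (-(d:ℝ)/2) / 2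
          * (|hco (mm d) k j| * (2*(k:ℝ))^j)
          * (t ^ (-(mm d + k)) * Real.exp (-a/(2*t))) := Finset.sum_le_sum hterm
    _ = (4*Real.pi) ^ (-(d:ℝ)/2) / 2
          * (∑ j ∈ Finset.range (k+1), |hco (mm d) k j| * (2*(k:ℝ))^j)
          * (t ^ (-(mm d + k)) * Real.exp (-a/(2*t))) := by
        rw [Finset.mul_sum, Finset.sum_mul]
    _ ≤ (4*Real.pi) ^ (-(d:ℝ)/2) / 2 * (mm d + 2*k + 2*(k:ℝ))^k
          * (t ^ (-(mm d + k)) * Real.exp (-a/(2*t))) := by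
        apply mul_le_mul_of_nonneg_right _ (by positivity)
        apply mul_le_mul_of_nonneg_left _ (by positivity)
        exact hco_weight_bound (mm d) (2*(k:ℝ)) hm (by positivity) k
    _ = (4*Real.pi) ^ (-(d:ℝ)/2) / 2 * (mm d + 4*k)^k
          * (t ^ (-(mm d + k)) * Real.exp (-a/(2*t))) := by
        rw [show mm d + 2*(k:ℝ) + 2*(k:ℝ) = mm d + 4*(k:ℝ) by ring]

lemma integrable_norm_gauss (d : ℕ) {b : ℝ} (hb : 0 < b) :
    Integrable (fun x : EuclideanSpace ℝ (Fin d) => ‖x‖ * Real.exp (-b*‖x‖^2)) := by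
  have hgauss : Integrable
      (fun x : EuclideanSpace ℝ (Fin d) => (Real.sqrt (2*b))⁻¹ * Real.exp (-(b/2)*‖x‖^2)) := by
    have h := (GaussianFourier.integrable_cexp_neg_mul_sq_norm_add
      (V := EuclideanSpace ℝ (Fin d)) (b := ((b/2 : ℝ) : ℂ))
      (by simpa using half_pos hb) 0 0).norm
    have heq : (fun v : EuclideanSpace ℝ (Fin d) =>
        ‖Complex.exp (-((b/2 : ℝ) : ℂ) * (‖v‖:ℂ)^2
          + 0 * ((inner ℝ (0 : EuclideanSpace ℝ (Fin d)) v : ℝ) : ℂ))‖)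
        = fun v : EuclideanSpace ℝ (Fin d) => Real.exp (-(b/2)*‖v‖^2) := by
      funext v
      rw [show (-((b/2 : ℝ) : ℂ) * (‖v‖:ℂ)^2
          + 0 * ((inner ℝ (0 : EuclideanSpace ℝ (Fin d)) v : ℝ) : ℂ))
          = (((-(b/2)*‖v‖^2 : ℝ)) : ℂ) by push_cast; ring]
      rw [Complex.norm_exp, Complex.ofReal_re]
    rw [heq] at h
    exact h.const_mul _
  apply hgauss.mono
  · apply Continuous.aestronglyMeasurable
    continuity
  · apply Filter.Eventually.of_forall
    intro x
    set r := ‖x‖ with hr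
    have hr0 : 0 ≤ r := norm_nonneg x
    set q := Real.sqrt (2*b) with hq
    have hq0 : 0 < q := Real.sqrt_pos.mpr (by linarith)
    have hq2 : q^2 = 2*b := Real.sq_sqrt (by linarith)
    have key : q * r ≤ 1 + (b/2)*r^2 := by nlinarith [sq_nonneg (2 - q*r)]
    have h1 : r ≤ q⁻¹ * Real.exp ((b/2)*r^2) := by
      have he : 1 + (b/2)*r^2 ≤ Real.exp ((b/2)*r^2) := by
        have := Real.add_one_le_exp ((b/2)*r^2); linarith
      rw [← mul_le_mul_iff_right₀ hq0, show q * (q⁻¹ * Real.exp ((b/2)*r^2))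
        = (q * q⁻¹) * Real.exp ((b/2)*r^2) by ring, mul_inv_cancel₀ hq0.ne', one_mul]
      linarith
    have h2 : r * Real.exp (-b*r^2) ≤ q⁻¹ * Real.exp (-(b/2)*r^2) := by
      calc r * Real.exp (-b*r^2)
          ≤ (q⁻¹ * Real.exp ((b/2)*r^2)) * Real.exp (-b*r^2) :=
            mul_le_mul_of_nonneg_right h1 (Real.exp_pos _).le
        _ = q⁻¹ * Real.exp (-(b/2)*r^2) := by
            rw [mul_assoc, ← Real.exp_add]; congr 2; ring
    have hnn : 0 ≤ r * Real.exp (-b*r^2) := by positivity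
    rw [Real.norm_eq_abs, Real.norm_eq_abs, abs_of_nonneg hnn,
      abs_of_nonneg (by positivity : (0:ℝ) ≤ q⁻¹ * Real.exp (-(b/2)*r^2))]
    exact h2

noncomputable def AA (d : ℕ) : ℝ := ∫ x : EuclideanSpace ℝ (Fin d), ‖x‖ * Real.exp (-‖x‖^2)

lemma AA_nonneg (d : ℕ) : 0 ≤ AA d :=
  integral_nonneg fun x => by positivity

lemma gauss_moment_scale (d : ℕ) {b : ℝ} (hb : 0 < b) :
    ∫ x : EuclideanSpace ℝ (Fin d), ‖x‖ * Real.exp (-b*‖x‖^2)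
      = b ^ (-((d:ℝ)+1)/2) * AA d := by
  have hsb : 0 < Real.sqrt b := Real.sqrt_pos.mpr hb
  have hcomp := MeasureTheory.Measure.integral_comp_smul_of_nonneg
    (μ := (volume : Measure (EuclideanSpace ℝ (Fin d))))
    (fun y : EuclideanSpace ℝ (Fin d) => ‖y‖ * Real.exp (-‖y‖^2)) (Real.sqrt b)
    (hR := hsb.le)
  have hLHS : (fun x : EuclideanSpace ℝ (Fin d) =>
      ‖(Real.sqrt b) • x‖ * Real.exp (-‖(Real.sqrt b) • x‖^2))
      = fun x : EuclideanSpace ℝ (Fin d) =>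
        Real.sqrt b * (‖x‖ * Real.exp (-b*‖x‖^2)) := by
    funext x
    rw [norm_smul, Real.norm_eq_abs, abs_of_nonneg hsb.le, mul_pow, Real.sq_sqrt hb.le]
    ring_nf
  rw [hLHS, MeasureTheory.integral_const_mul, finrank_euclideanSpace_fin] at hcomp
  simp only [smul_eq_mul] at hcomp
  have hAAeq : ∫ x : EuclideanSpace ℝ (Fin d),
      (fun y : EuclideanSpace ℝ (Fin d) => ‖y‖ * Real.exp (-‖y‖^2)) x = AA d := rfl
  rw [hAAeq] at hcomp
  have h1 : ∫ x : EuclideanSpace ℝ (Fin d), ‖x‖ * Real.exp (-b*‖x‖^2)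
      = (Real.sqrt b)⁻¹ * (((Real.sqrt b)^d)⁻¹ * AA d) := by
    field_simp at hcomp ⊢
    rw [show (fun a : EuclideanSpace ℝ (Fin d) => ‖a‖ * rexp (-(‖a‖ ^ 2 * b)))
      = fun a => ‖a‖ * rexp (-(b * ‖a‖ ^ 2)) by funext a; rw [mul_comm (‖a‖ ^ 2) b]] at hcomp
    linarith [hcomp]
  rw [h1]
  have hs : Real.sqrt b = b ^ ((1:ℝ)/2) := Real.sqrt_eq_rpow b
  rw [hs, ← Real.rpow_natCast (b ^ ((1:ℝ)/2)) d, ← Real.rpow_mul hb.le,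
    ← Real.rpow_neg hb.le, ← Real.rpow_neg hb.le, ← mul_assoc, ← Real.rpow_add hb,
    show -((1:ℝ)/2) + -((1:ℝ)/2*(d:ℝ)) = -((d:ℝ)+1)/2 by ring]

lemma integral_deriv_bound (d k : ℕ) {t : ℝ} (ht : 0 < t) :
    (∫ x : EuclideanSpace ℝ (Fin d), ‖deriv^[k] (fun s => gradient (heatKer d s) x) t‖)
      ≤ ((4*Real.pi) ^ (-(d:ℝ)/2) / 2 * (8 ^ (((d:ℝ)+1)/2) * AA d)) * (mm d + 4*k)^k
        * t ^ (-(k:ℝ) - 1/2) := by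
  have h8t : (0:ℝ) < 8*t := by linarith
  have hb : (0:ℝ) < (8*t)⁻¹ := by positivity
  set Cst := (4*Real.pi) ^ (-(d:ℝ)/2) / 2 * (mm d + 4*(k:ℝ))^k * t ^ (-(mm d + k)) with hCst
  have hCst0 : 0 ≤ Cst := by
    rw [hCst]
    have hm : (0:ℝ) ≤ mm d := by rw [mm]; positivity
    have : (0:ℝ) ≤ (mm d + 4*(k:ℝ))^k := by positivity
    positivity
  have hptw : ∀ x : EuclideanSpace ℝ (Fin d),
      ‖deriv^[k] (fun s => gradient (heatKer d s) x) t‖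
        ≤ Cst * (‖x‖ * Real.exp (-(8*t)⁻¹*‖x‖^2)) := by
    intro x
    rw [deriv_iter_grad d x k t ht, norm_smul, Real.norm_eq_abs]
    have hbound := ek_abs_le d k ht (show (0:ℝ) ≤ ‖x‖^2/4 by positivity)
    have harg : -(‖x‖^2/4)/(2*t) = -(8*t)⁻¹*‖x‖^2 := by
      have ht' : t ≠ 0 := ht.ne'
      field_simp
      ring
    rw [harg] at hbound
    calc |ek d k t (‖x‖^2/4)| * ‖x‖
        ≤ ((4*Real.pi) ^ (-(d:ℝ)/2) / 2 * (mm d + 4*k)^k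
            * (t ^ (-(mm d + k)) * Real.exp (-(8*t)⁻¹*‖x‖^2))) * ‖x‖ :=
          mul_le_mul_of_nonneg_right hbound (norm_nonneg x)
      _ = Cst * (‖x‖ * Real.exp (-(8*t)⁻¹*‖x‖^2)) := by rw [hCst]; ring
  calc (∫ x : EuclideanSpace ℝ (Fin d), ‖deriv^[k] (fun s => gradient (heatKer d s) x) t‖)
      ≤ ∫ x : EuclideanSpace ℝ (Fin d), Cst * (‖x‖ * Real.exp (-(8*t)⁻¹*‖x‖^2)) := by
        apply integral_mono_of_nonneg
        · exact Filter.Eventually.of_forall fun x => norm_nonneg _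
        · exact (integrable_norm_gauss d hb).const_mul Cst
        · exact Filter.Eventually.of_forall hptw
    _ = Cst * ((8*t)⁻¹ ^ (-((d:ℝ)+1)/2) * AA d) := by
        rw [MeasureTheory.integral_const_mul, gauss_moment_scale d hb]
    _ = ((4*Real.pi) ^ (-(d:ℝ)/2) / 2 * (8 ^ (((d:ℝ)+1)/2) * AA d)) * (mm d + 4*k)^k
        * t ^ (-(k:ℝ) - 1/2) := by
        have hinv : ((8*t)⁻¹ : ℝ) ^ (-((d:ℝ)+1)/2) = (8*t) ^ (((d:ℝ)+1)/2) := by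
          rw [Real.inv_rpow h8t.le, ← Real.rpow_neg h8t.le,
            show -(-((d:ℝ)+1)/2) = ((d:ℝ)+1)/2 by ring]
        have hmul : ((8*t) : ℝ) ^ (((d:ℝ)+1)/2) = 8 ^ (((d:ℝ)+1)/2) * t ^ (((d:ℝ)+1)/2) :=
          Real.mul_rpow (by norm_num) ht.le
        have htt : t ^ (-(mm d + (k:ℝ))) * t ^ (((d:ℝ)+1)/2) = t ^ (-(k:ℝ) - 1/2) := by
          rw [← Real.rpow_add ht]
          congr 1
          rw [mm]; ring
        rw [hinv, hmul, hCst]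
        rw [show (4*Real.pi) ^ (-(d:ℝ)/2) / 2 * (mm d + 4*(k:ℝ))^k * t ^ (-(mm d + (k:ℝ)))
            * (8 ^ (((d:ℝ)+1)/2) * t ^ (((d:ℝ)+1)/2) * AA d)
            = (4*Real.pi) ^ (-(d:ℝ)/2) / 2 * (8 ^ (((d:ℝ)+1)/2) * AA d) * (mm d + 4*(k:ℝ))^k
            * (t ^ (-(mm d + (k:ℝ))) * t ^ (((d:ℝ)+1)/2)) by ring, htt]

/-- There is `C₀ ≥ 1` depending only on `d` such that `‖∇Γ(t,·)‖_{L¹} ≤ C₀ t^{-1/2}` for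
all `t > 0`, and `‖∂ₜᵏ ∇Γ(t,·)‖_{L¹} ≤ C₀^(k+1) k^{k-2/3} t^{-k-1/2}` for all integers
`k ≥ 1` and `t > 0`. -/
theorem heat_kernel_gradient_L1 (d : ℕ) :
    ∃ C₀ ≥ (1:ℝ),
      (∀ t : ℝ, 0 < t →
        (∫ x : EuclideanSpace ℝ (Fin d), ‖gradient (heatKer d t) x‖)
          ≤ C₀ * t ^ (-(1:ℝ)/2)) ∧
      (∀ k : ℕ, 1 ≤ k → ∀ t : ℝ, 0 < t →
        (∫ x : EuclideanSpace ℝ (Fin d), ‖deriv^[k] (fun s => gradient (heatKer d s) x) t‖)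
          ≤ C₀^(k+1) * (k:ℝ) ^ ((k:ℝ) - 2/3) * t ^ (-(k:ℝ) - 1/2)) := by
  have hAA := AA_nonneg d
  have hmm1 : (1:ℝ) ≤ mm d := by
    rw [mm]; have : (0:ℝ) ≤ (d:ℝ) := Nat.cast_nonneg d; linarith
  set C1 := (4*Real.pi) ^ (-(d:ℝ)/2) / 2 * (8 ^ (((d:ℝ)+1)/2) * AA d) with hC1
  have hC1nn : 0 ≤ C1 := by rw [hC1]; positivity
  set C2 := 2*(mm d + 4) with hC2
  have hC2nn : (0:ℝ) ≤ C2 := by rw [hC2]; linarith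
  refine ⟨1 + C1 + C2, by linarith, ?_, ?_⟩
  · intro t ht
    have h := integral_deriv_bound d 0 ht
    simp only [Function.iterate_zero, id_eq, Nat.cast_zero, pow_zero, mul_one, mul_zero,
      add_zero, neg_zero, zero_sub] at h
    calc (∫ x : EuclideanSpace ℝ (Fin d), ‖gradient (heatKer d t) x‖)
        ≤ C1 * t ^ (-(1:ℝ)/2) := by
          rw [hC1, show (-(1:ℝ)/2) = -(1/2:ℝ) by norm_num]
          exact h
      _ ≤ (1 + C1 + C2) * t ^ (-(1:ℝ)/2) := by
          apply mul_le_mul_of_nonneg_right (by linarith)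
          exact (Real.rpow_pos_of_pos ht _).le
  · intro k hk t ht
    have h := integral_deriv_bound d k ht
    have hk1 : (1:ℝ) ≤ (k:ℝ) := by exact_mod_cast hk
    have h0k : (0:ℝ) < (k:ℝ) := by linarith
    have hfinal : C1 * (mm d + 4*(k:ℝ))^k ≤ (1+C1+C2)^(k+1) * (k:ℝ)^((k:ℝ)-2/3) := by
      have e1 : (mm d + 4*(k:ℝ))^k ≤ (mm d + 4)^k * ((k:ℝ))^k := by
        rw [← mul_pow]
        apply pow_le_pow_left₀ (by linarith)
        nlinarith
      have e2 : ((k:ℝ))^k ≤ 2^k * (k:ℝ)^((k:ℝ)-2/3) := by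
        have hrw : (k:ℝ)^(k:ℕ) = (k:ℝ)^(((k:ℕ)):ℝ) := (Real.rpow_natCast _ _).symm
        have hsplit : (k:ℝ)^(((k:ℕ)):ℝ) = (k:ℝ)^((2:ℝ)/3) * (k:ℝ)^((k:ℝ)-2/3) := by
          rw [← Real.rpow_add h0k]; congr 1; ring
        rw [hrw, hsplit]
        apply mul_le_mul_of_nonneg_right _ (Real.rpow_nonneg h0k.le _)
        calc (k:ℝ)^((2:ℝ)/3) ≤ (k:ℝ)^((1:ℝ)) :=
              Real.rpow_le_rpow_of_exponent_le hk1 (by norm_num)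
          _ = (k:ℝ) := Real.rpow_one _
          _ ≤ 2^k := by
              have := k.lt_two_pow_self.le
              exact_mod_cast this
      have e3 : (mm d + 4)^k * ((k:ℝ))^k ≤ (mm d + 4)^k * (2^k * (k:ℝ)^((k:ℝ)-2/3)) :=
        mul_le_mul_of_nonneg_left e2 (by positivity)
      have e4 : (mm d + 4)^k * (2^k * (k:ℝ)^((k:ℝ)-2/3)) = C2^k * (k:ℝ)^((k:ℝ)-2/3) := by
        rw [hC2, mul_pow]; ring
      have e5 : C1 * (C2^k * (k:ℝ)^((k:ℝ)-2/3)) ≤ ((1+C1+C2) * (1+C1+C2)^k) * (k:ℝ)^((k:ℝ)-2/3) := by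
        have h1 : C2^k ≤ (1+C1+C2)^k := pow_le_pow_left₀ hC2nn (by linarith) k
        have h2 : (0:ℝ) ≤ (k:ℝ)^((k:ℝ)-2/3) := Real.rpow_nonneg h0k.le _
        have h3 : C1 * C2^k ≤ (1+C1+C2) * (1+C1+C2)^k := by
          apply mul_le_mul (by linarith) h1 (by positivity) (by linarith)
        nlinarith [h3, h2, mul_le_mul_of_nonneg_right h3 h2]
      calc C1 * (mm d + 4*(k:ℝ))^k ≤ C1 * ((mm d + 4)^k * ((k:ℝ))^k) :=
            mul_le_mul_of_nonneg_left e1 hC1nn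
        _ ≤ C1 * ((mm d + 4)^k * (2^k * (k:ℝ)^((k:ℝ)-2/3))) :=
            mul_le_mul_of_nonneg_left e3 hC1nn
        _ = C1 * (C2^k * (k:ℝ)^((k:ℝ)-2/3)) := by rw [e4]
        _ ≤ ((1+C1+C2) * (1+C1+C2)^k) * (k:ℝ)^((k:ℝ)-2/3) := e5
        _ = (1+C1+C2)^(k+1) * (k:ℝ)^((k:ℝ)-2/3) := by rw [pow_succ]; ring
    calc (∫ x : EuclideanSpace ℝ (Fin d), ‖deriv^[k] (fun s => gradient (heatKer d s) x) t‖)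
        ≤ C1 * (mm d + 4*(k:ℝ))^k * t ^ (-(k:ℝ) - 1/2) := h
      _ ≤ (1+C1+C2)^(k+1) * (k:ℝ)^((k:ℝ)-2/3) * t ^ (-(k:ℝ) - 1/2) := by
          apply mul_le_mul_of_nonneg_right hfinal (Real.rpow_pos_of_pos ht _).le
end
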